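/- arXiv:1711.10661 — 6 statements merged into one kernel-verified Lean document; each statement's English description precedes it below -/
import Mathlib

section
/- For every integer n ≥ 1 and every real number p with 0 ≤ p < 1, the expectation of 1/√(n−s) for s drawn from the binomial distribution B(n−1,p) is at most 1/√((1−p)n); that is, Σ_{s=0}^{n−1} C(n−1,s) p^s (1−p)^{n−1−s} · (1/√(n−s)) ≤ 1/√((1−p)·n). -/
/-!
Since `√` is concave, Jensen's inequality gives `E[1/√(n-s)] ≤ √(E[1/(n-s)])`. The inner
expectation is computed exactly: `C(n-1,s) · n = C(n,s) · (n-s)` turns `(1-p) n · E[1/(n-s)]`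
into the binomial expansion of `(p + (1-p))^n` with its top term `p^n` missing, so
`E[1/(n-s)] = (1 - p^n) / ((1-p) n) ≤ 1 / ((1-p) n)`.
-/

open Finset

theorem sum_binomial_eq_one {R : Type*} [CommRing R] (p : R) (m : ℕ) :
    ∑ s ∈ range (m + 1), (m.choose s : R) * p ^ s * (1 - p) ^ (m - s) = 1 := by
  have h := add_pow p (1 - p) m
  rw [add_sub_cancel, one_pow] at h
  exact (sum_congr rfl fun s _ => by ring).trans h.symm

theorem binomial_div_mul_eq {K : Type*} [Field K] [CharZero K] (p : K) {m s : ℕ} (hs : s ≤ m) :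
    (m.choose s : K) * p ^ s * (1 - p) ^ (m - s) / (m + 1 - s) * ((1 - p) * (m + 1)) =
      ((m + 1).choose s : K) * p ^ s * (1 - p) ^ (m + 1 - s) := by
  have hchoose := congrArg (Nat.cast : ℕ → K) (Nat.choose_mul_succ_eq m s)
  push_cast [Nat.cast_sub (by omega : s ≤ m + 1)] at hchoose
  have hne : (m + 1 - s : K) ≠ 0 := by
    rw [← Nat.cast_succ, ← Nat.cast_sub (by omega)]
    exact Nat.cast_ne_zero.mpr (by omega)
  rw [Nat.succ_sub hs, pow_succ]
  field_simp
  linear_combination p ^ s * (1 - p) ^ (m - s) * (1 - p) * hchoose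

theorem sum_binomial_div_mul_eq {K : Type*} [Field K] [CharZero K] (p : K) (m : ℕ) :
    (∑ s ∈ range (m + 1), (m.choose s : K) * p ^ s * (1 - p) ^ (m - s) / (m + 1 - s)) *
        ((1 - p) * (m + 1)) = 1 - p ^ (m + 1) := by
  have hexpand := sum_binomial_eq_one p (m + 1)
  rw [sum_range_succ, Nat.choose_self, Nat.sub_self] at hexpand
  rw [sum_mul, sum_congr rfl fun s hs => binomial_div_mul_eq p (Nat.lt_succ_iff.mp (mem_range.mp hs))]
  linear_combination hexpand

theorem sum_binomial_div_le {p : ℝ} (hp0 : 0 ≤ p) (hp1 : p < 1) (m : ℕ) :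
    ∑ s ∈ range (m + 1), (m.choose s : ℝ) * p ^ s * (1 - p) ^ (m - s) / (m + 1 - s) ≤
      1 / ((1 - p) * (m + 1)) := by
  have hq : 0 < 1 - p := by linarith
  rw [le_div_iff₀ (by positivity), sum_binomial_div_mul_eq]
  linarith [pow_nonneg hp0 (m + 1)]

/-- For every integer `n ≥ 1` and real `0 ≤ p < 1`, the expectation of
`1/√(n−s)` for `s ∼ B(n−1,p)` is at most `1/√((1−p)n)`. -/
theorem stmt_0 (n : ℕ) (hn : 1 ≤ n) (p : ℝ) (hp0 : 0 ≤ p) (hp1 : p < 1) :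
    ∑ s ∈ Finset.range n,
        ((n - 1).choose s : ℝ) * p ^ s * (1 - p) ^ (n - 1 - s) *
          (1 / Real.sqrt ((n : ℝ) - (s : ℝ))) ≤
      1 / Real.sqrt ((1 - p) * n) := by
  obtain ⟨m, rfl⟩ : ∃ m, n = m + 1 := ⟨n - 1, by omega⟩
  have hdiff_pos : ∀ s ∈ range (m + 1), (0 : ℝ) < m + 1 - s := fun s hs => by
    have : (s : ℝ) < m + 1 := by exact_mod_cast mem_range.mp hs
    linarith
  have hq : 0 ≤ 1 - p := by linarith
  have jensen := Real.strictConcaveOn_sqrt.concaveOn.le_map_sum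
    (w := fun s => (m.choose s : ℝ) * p ^ s * (1 - p) ^ (m - s))
    (p := fun s => 1 / ((m : ℝ) + 1 - s)) (fun s _ => by positivity)
    (sum_binomial_eq_one p m) fun s hs => (one_div_pos.mpr (hdiff_pos s hs)).le
  push_cast
  simp only [smul_eq_mul, one_div, ← Real.sqrt_inv] at jensen ⊢
  refine jensen.trans (Real.sqrt_le_sqrt ?_)
  simpa only [div_eq_mul_inv, one_mul] using sum_binomial_div_le hp0 hp1 m
end

section
/- For every integer n ≥ 1 and every real number q with 0 < q ≤ 1, the expectation of 1/√(s+1) for s drawn from the binomial distribution B(n−1,q) is at most 1/√(qn); that is, Σ_{s=0}^{n−1} C(n−1,s) q^s (1−q)^{n−1−s} · (1/√(s+1)) ≤ 1/√(q·n). -/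
/-!
For `S ∼ B(m,q)` with `m = n - 1`, Jensen's inequality for the concave square root gives
`E[1/√(S+1)] ≤ √E[1/(S+1)]`.
Since `C(m,s)/(s+1) = C(m+1,s+1)/(m+1)`, the mean `E[1/(S+1)]` is a shifted binomial sum,
equal to `(1 - (1-q)^(m+1)) / (q(m+1)) ≤ 1/(q(m+1))`.
-/

open Finset

theorem mul_sum_choose_mul_pow_mul_pow_div_succ {K : Type*} [Field K] [CharZero K]
    (x y : K) (m : ℕ) :
    (m + 1) * x * ∑ s ∈ range (m + 1), (m.choose s : K) * x ^ s * y ^ (m - s) / (s + 1) =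
      (x + y) ^ (m + 1) - y ^ (m + 1) := by
  have hterm : ∀ s ∈ range (m + 1),
      (m + 1) * x * ((m.choose s : K) * x ^ s * y ^ (m - s) / (s + 1)) =
        x ^ (s + 1) * y ^ (m + 1 - (s + 1)) * ((m + 1).choose (s + 1) : K) := by
    intro s _
    have hchoose : ((m : K) + 1) * m.choose s = (m + 1).choose (s + 1) * (s + 1) := by
      exact_mod_cast Nat.add_one_mul_choose_eq m s
    rw [Nat.add_sub_add_right]
    field_simp
    linear_combination x ^ (s + 1) * y ^ (m - s) * hchoose
  rw [mul_sum, sum_congr rfl hterm, add_pow, sum_range_succ' _ (m + 1)]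
  simp

theorem sum_choose_mul_pow_mul_one_sub_pow {R : Type*} [CommRing R] (x : R) (m : ℕ) :
    ∑ s ∈ range (m + 1), (m.choose s : R) * x ^ s * (1 - x) ^ (m - s) = 1 := by
  calc ∑ s ∈ range (m + 1), (m.choose s : R) * x ^ s * (1 - x) ^ (m - s)
      = (x + (1 - x)) ^ m := by rw [add_pow]; exact sum_congr rfl fun s _ => by ring
    _ = 1 := by rw [add_sub_cancel, one_pow]

theorem sum_mul_sqrt_le_sqrt_sum_mul {ι : Type*} (t : Finset ι) (w x : ι → ℝ)
    (hw : ∀ i ∈ t, 0 ≤ w i) (hw_sum : ∑ i ∈ t, w i = 1) (hx : ∀ i ∈ t, 0 ≤ x i) :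
    ∑ i ∈ t, w i * √(x i) ≤ √(∑ i ∈ t, w i * x i) :=
  Real.strictConcaveOn_sqrt.concaveOn.le_map_sum hw hw_sum hx

theorem sum_choose_mul_pow_mul_one_sub_pow_div_succ_le {q : ℝ} (hq0 : 0 < q) (hq1 : q ≤ 1)
    (m : ℕ) :
    ∑ s ∈ range (m + 1), (m.choose s : ℝ) * q ^ s * (1 - q) ^ (m - s) / (s + 1) ≤
      1 / (q * (m + 1)) := by
  rw [le_div_iff₀ (by positivity), mul_comm, mul_comm q,
    mul_sum_choose_mul_pow_mul_pow_div_succ, add_sub_cancel, one_pow]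
  have : 0 ≤ (1 - q) ^ (m + 1) := pow_nonneg (sub_nonneg.2 hq1) _
  linarith

/-- For every integer `n ≥ 1` and real `0 < q ≤ 1`, the expectation of
`1/√(s+1)` for `s ∼ B(n−1,q)` is at most `1/√(qn)`. -/
theorem stmt_1 (n : ℕ) (hn : 1 ≤ n) (q : ℝ) (hq0 : 0 < q) (hq1 : q ≤ 1) :
    ∑ s ∈ Finset.range n,
        ((n - 1).choose s : ℝ) * q ^ s * (1 - q) ^ (n - 1 - s) *
          (1 / Real.sqrt ((s : ℝ) + 1)) ≤
      1 / Real.sqrt (q * n) := by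
  obtain ⟨m, rfl⟩ : ∃ m, n = m + 1 := ⟨n - 1, (Nat.sub_add_cancel hn).symm⟩
  set w : ℕ → ℝ := fun s => (m.choose s : ℝ) * q ^ s * (1 - q) ^ (m - s)
  have hw : ∀ s ∈ range (m + 1), 0 ≤ w s := fun s _ => by
    have : 0 ≤ 1 - q := sub_nonneg.2 hq1
    positivity
  calc ∑ s ∈ range (m + 1), w s * (1 / √((s : ℝ) + 1))
      = ∑ s ∈ range (m + 1), w s * √(1 / ((s : ℝ) + 1)) := by simp only [one_div, Real.sqrt_inv]
    _ ≤ √(∑ s ∈ range (m + 1), w s * (1 / ((s : ℝ) + 1))) :=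
        sum_mul_sqrt_le_sqrt_sum_mul _ w _ hw (sum_choose_mul_pow_mul_one_sub_pow q m)
          fun s _ => by positivity
    _ ≤ √(1 / (q * (m + 1))) := by
        gcongr
        simpa only [mul_one_div] using sum_choose_mul_pow_mul_one_sub_pow_div_succ_le hq0 hq1 m
    _ = 1 / √(q * ((m + 1 : ℕ) : ℝ)) := by push_cast; rw [one_div, Real.sqrt_inv, one_div]
end

section
/- Let S ⊆ {1,…,k}, let F₁,…,F_m be (possibly partial) Boolean functions, where F_i is defined on a subset of X_{i,1} × ⋯ × X_{i,k}, and let μ₁,…,μ_m and μ̃₁,…,μ̃_m be probability distributions with μ_i, μ̃_i supported on the domain of F_i. Then disc_S(⊕_{i=1}^m F_i, ⊗_{i=1}^m μ_i) ≤ Σ_{A ⊆ {1,…,m}} disc_S(⊕_{i∈A} F_i, ⊗_{i∈A} μ̃_i) · ∏_{i∉A} ‖μ_i − μ̃_i‖₁, where ‖μ − μ̃‖₁ = Σ_x |μ(x) − μ̃(x)| and, for A = ∅, the empty XOR is the constant-0 function on a one-point domain whose S-discrepancy equals 1. -/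
open Finset
open scoped Classical

/-- `χ` is an `S`-cylinder intersection on the combined input space of the instances
indexed by `A`: a product over `j ∈ S` of `{0,1}`-valued functions `φ j`, where `φ j`
does not depend on the `j`-th coordinates `(x_{i,j})_{i∈A}`. -/
def IsCylinderM {m k : ℕ} {X : Fin m → Fin k → Type*} (A : Finset (Fin m))
    (S : Finset (Fin k)) (χ : (∀ i : A, ∀ j, X i j) → ℝ) : Prop :=
  ∃ φ : Fin k → ((∀ i : A, ∀ j, X i j) → ℝ),
    (∀ j ∈ S, ∀ x, φ j x = 0 ∨ φ j x = 1) ∧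
    (∀ j ∈ S, ∀ x y, (∀ i : A, ∀ j', j' ≠ j → x i j' = y i j') → φ j x = φ j y) ∧
    (∀ x, χ x = ∏ j ∈ S, φ j x)

/-- The `S`-discrepancy of the XOR `⊕_{i∈A} F_i` of the (possibly partial) Boolean
functions `F_i` (with domains `D i`), with respect to the product distribution
`⊗_{i∈A} μ_i`. The sum defining the correlation ranges over the domain
`∏_{i∈A} dom F_i`, and `(−1)^{⊕_{i∈A} F_i(x_i)} = ∏_{i∈A} (−1)^{F_i(x_i)}`. -/
noncomputable def discM {m k : ℕ} {X : Fin m → Fin k → Type*} [∀ i j, Fintype (X i j)]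
    (A : Finset (Fin m)) (S : Finset (Fin k))
    (D : ∀ i, Finset (∀ j, X i j)) (F : ∀ i, (∀ j, X i j) → Bool)
    (μ : ∀ i, (∀ j, X i j) → ℝ) : ℝ :=
  sSup {t : ℝ | ∃ χ : (∀ i : A, ∀ j, X i j) → ℝ, IsCylinderM A S χ ∧
    t = |∑ x ∈ Finset.univ.filter (fun x : ∀ i : A, ∀ j, X i j => ∀ i : A, x i ∈ D i.1),
          (∏ i : A, if F i.1 (x i) then (-1 : ℝ) else 1) * (∏ i : A, μ i.1 (x i)) * χ x|}

/-!
Write `∏ᵢ μᵢ = ∑_A ∏_{i ∈ A} μ̃ᵢ · ∏_{i ∉ A} (μᵢ - μ̃ᵢ)` inside the correlation of `⊕ᵢ Fᵢ` with a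
cylinder intersection `χ`. In the `A`-term, freezing the inputs `b` of the instances outside `A`
leaves a cylinder intersection on the instances in `A`, so the inner sum over those inputs is at
most `disc_S(⊕_{i ∈ A} Fᵢ, ⊗_{i ∈ A} μ̃ᵢ)`; the outer sum of `|∏_{i ∉ A} (μᵢ - μ̃ᵢ)(bᵢ)|` over `b`
is `∏_{i ∉ A} ‖μᵢ - μ̃ᵢ‖₁`.
-/

section ProductExpansion

variable {ι : Type*} [Fintype ι] [DecidableEq ι] {Y : ι → Type*} [∀ i, Fintype (Y i)]

theorem sum_prod_mul_eq_sum_prod_mul_prod_compl_sub (w w' : ∀ i, Y i → ℝ) (χ : (∀ i, Y i) → ℝ) :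
    ∑ x, (∏ i, w i (x i)) * χ x =
      ∑ A : Finset ι, ∑ x, (∏ i ∈ A, w' i (x i)) * (∏ i ∈ Aᶜ, (w i (x i) - w' i (x i))) * χ x := by
  rw [sum_comm]
  refine sum_congr rfl fun x _ => ?_
  rw [← sum_mul, ← Fintype.prod_add]
  simp only [add_sub_cancel]

theorem abs_sum_prod_mul_prod_compl_le (A : Finset ι) (u v : ∀ i, Y i → ℝ)
    (χ : (∀ i, Y i) → ℝ) {M : ℝ}
    (hM : ∀ b : ∀ i : {i // i ∉ A}, Y i, |∑ a : ∀ i : A, Y i,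
      (∏ i : A, u i (a i)) * χ ((Equiv.piEquivPiSubtypeProd (· ∈ A) Y).symm (a, b))| ≤ M) :
    |∑ x, (∏ i ∈ A, u i (x i)) * (∏ i ∈ Aᶜ, v i (x i)) * χ x| ≤
      M * ∏ i ∈ Aᶜ, ∑ y, |v i y| := by
  set q := Equiv.piEquivPiSubtypeProd (· ∈ A) Y
  have prod_compl_eq : ∀ f : ι → ℝ, ∏ i ∈ Aᶜ, f i = ∏ i : {i // i ∉ A}, f i :=
    prod_subtype _ fun _ => mem_compl
  have hsplit : ∀ a b, (∏ i ∈ A, u i (q.symm (a, b) i)) * (∏ i ∈ Aᶜ, v i (q.symm (a, b) i)) *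
      χ (q.symm (a, b)) =
        (∏ i : {i // i ∉ A}, v i (b i)) * ((∏ i : A, u i (a i)) * χ (q.symm (a, b))) := by
    intro a b
    rw [← prod_coe_sort A, prod_compl_eq]
    simp only [fun i => show q.symm (a, b) i.1 = a i from dif_pos i.2,
      fun i => show q.symm (a, b) i.1 = b i from dif_neg i.2]
    ring
  calc |∑ x, (∏ i ∈ A, u i (x i)) * (∏ i ∈ Aᶜ, v i (x i)) * χ x|
      = |∑ b, (∏ i : {i // i ∉ A}, v i (b i)) *
          ∑ a, (∏ i : A, u i (a i)) * χ (q.symm (a, b))| := by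
        rw [← q.symm.sum_comp, Fintype.sum_prod_type, sum_comm]
        simp_rw [hsplit, mul_sum]
    _ ≤ ∑ b : ∀ i : {i // i ∉ A}, Y i, |∏ i : {i // i ∉ A}, v i (b i)| * M := by
        refine (abs_sum_le_sum_abs _ _).trans (sum_le_sum fun b _ => ?_)
        rw [abs_mul]
        exact mul_le_mul_of_nonneg_left (hM b) (abs_nonneg _)
    _ = M * ∏ i ∈ Aᶜ, ∑ y, |v i y| := by
        rw [← sum_mul, mul_comm, prod_compl_eq, Fintype.prod_sum]
        simp_rw [abs_prod]

end ProductExpansion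

section Discrepancy

variable {m k : ℕ} {X : Fin m → Fin k → Type*}

theorem IsCylinderM.abs_le_one {A : Finset (Fin m)} {S : Finset (Fin k)}
    {χ : (∀ i : A, ∀ j, X i j) → ℝ} (hχ : IsCylinderM A S χ) (x : ∀ i : A, ∀ j, X i j) :
    |χ x| ≤ 1 := by
  obtain ⟨φ, h01, -, hφ⟩ := hχ
  rw [hφ x, abs_prod]
  refine prod_le_one (fun j _ => abs_nonneg _) fun j hj => ?_
  rcases h01 j hj x with h | h <;> simp [h]

theorem isCylinderM_one (A : Finset (Fin m)) (S : Finset (Fin k)) :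
    IsCylinderM A S (fun _ : ∀ i : A, ∀ j, X i j => (1 : ℝ)) :=
  ⟨fun _ _ => 1, fun _ _ _ => Or.inr rfl, fun _ _ _ _ _ => rfl, fun _ => prod_const_one.symm⟩

theorem IsCylinderM.comp {A B : Finset (Fin m)} {S : Finset (Fin k)}
    {χ : (∀ i : B, ∀ j, X i j) → ℝ} (hχ : IsCylinderM B S χ)
    (g : (∀ i : A, ∀ j, X i j) → ∀ i : B, ∀ j, X i j)
    (hg : ∀ j x y, (∀ i j', j' ≠ j → x i j' = y i j') → ∀ i j', j' ≠ j → g x i j' = g y i j') :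
    IsCylinderM A S (χ ∘ g) := by
  obtain ⟨φ, h01, hφj, hφ⟩ := hχ
  exact ⟨fun j => φ j ∘ g, fun j hj x => h01 j hj (g x),
    fun j hj x y hxy => hφj j hj _ _ (hg j x y hxy), fun x => hφ (g x)⟩

/-- Folding the domain and the sign `(-1)^{Fᵢ}` into the weight turns the correlation
in `discM` into a plain multilinear sum over all inputs. -/
noncomputable def signedWeight (D : ∀ i, Finset (∀ j, X i j)) (F : ∀ i, (∀ j, X i j) → Bool)
    (μ : ∀ i, (∀ j, X i j) → ℝ) (i : Fin m) (y : ∀ j, X i j) : ℝ :=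
  if y ∈ D i then (if F i y then -1 else 1) * μ i y else 0

theorem abs_signedWeight_sub_le (D : ∀ i, Finset (∀ j, X i j)) (F : ∀ i, (∀ j, X i j) → Bool)
    (μ μ' : ∀ i, (∀ j, X i j) → ℝ) (i : Fin m) (y : ∀ j, X i j) :
    |signedWeight D F μ i y - signedWeight D F μ' i y| ≤ |μ i y - μ' i y| := by
  unfold signedWeight
  split_ifs <;> simp [neg_add_eq_sub, abs_sub_comm]

variable [∀ i j, Fintype (X i j)]

noncomputable def correlation (A : Finset (Fin m)) (D : ∀ i, Finset (∀ j, X i j))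
    (F : ∀ i, (∀ j, X i j) → Bool) (μ : ∀ i, (∀ j, X i j) → ℝ)
    (χ : (∀ i : A, ∀ j, X i j) → ℝ) : ℝ :=
  ∑ x, (∏ i : A, signedWeight D F μ i (x i)) * χ x

theorem sum_filter_eq_correlation (A : Finset (Fin m)) (D : ∀ i, Finset (∀ j, X i j))
    (F : ∀ i, (∀ j, X i j) → Bool) (μ : ∀ i, (∀ j, X i j) → ℝ)
    (χ : (∀ i : A, ∀ j, X i j) → ℝ) :
    ∑ x ∈ univ.filter (fun x : ∀ i : A, ∀ j, X i j => ∀ i : A, x i ∈ D i.1),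
      (∏ i : A, if F i.1 (x i) then (-1 : ℝ) else 1) * (∏ i : A, μ i.1 (x i)) * χ x =
        correlation A D F μ χ := by
  rw [sum_filter]
  refine sum_congr rfl fun x _ => ?_
  split_ifs with hx
  · rw [← prod_mul_distrib]
    simp only [signedWeight, if_pos (hx _)]
  · obtain ⟨i, hi⟩ := not_forall.mp hx
    rw [prod_eq_zero (mem_univ i) (if_neg hi), zero_mul]

theorem discM_eq_sSup_correlation (A : Finset (Fin m)) (S : Finset (Fin k))
    (D : ∀ i, Finset (∀ j, X i j)) (F : ∀ i, (∀ j, X i j) → Bool)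
    (μ : ∀ i, (∀ j, X i j) → ℝ) :
    discM A S D F μ =
      sSup {t | ∃ χ, IsCylinderM A S χ ∧ t = |correlation A D F μ χ|} := by
  simp only [discM, sum_filter_eq_correlation]

theorem abs_correlation_le_sum_abs_prod (A : Finset (Fin m)) {S : Finset (Fin k)}
    (D : ∀ i, Finset (∀ j, X i j)) (F : ∀ i, (∀ j, X i j) → Bool) (μ : ∀ i, (∀ j, X i j) → ℝ)
    {χ : (∀ i : A, ∀ j, X i j) → ℝ} (hχ : IsCylinderM A S χ) :
    |correlation A D F μ χ| ≤ ∑ x : ∀ i : A, ∀ j, X i j, |∏ i : A, signedWeight D F μ i (x i)| := by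
  refine (abs_sum_le_sum_abs _ _).trans (sum_le_sum fun x _ => ?_)
  rw [abs_mul]
  exact mul_le_of_le_one_right (abs_nonneg _) (hχ.abs_le_one x)

theorem abs_correlation_le_discM {A : Finset (Fin m)} {S : Finset (Fin k)}
    (D : ∀ i, Finset (∀ j, X i j)) (F : ∀ i, (∀ j, X i j) → Bool) (μ : ∀ i, (∀ j, X i j) → ℝ)
    {χ : (∀ i : A, ∀ j, X i j) → ℝ} (hχ : IsCylinderM A S χ) :
    |correlation A D F μ χ| ≤ discM A S D F μ := by
  rw [discM_eq_sSup_correlation]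
  refine le_csSup ⟨∑ x : ∀ i : A, ∀ j, X i j, |∏ i : A, signedWeight D F μ i (x i)|, ?_⟩
    ⟨χ, hχ, rfl⟩
  rintro t ⟨ψ, hψ, rfl⟩
  exact abs_correlation_le_sum_abs_prod A D F μ hψ

theorem discM_nonneg (A : Finset (Fin m)) (S : Finset (Fin k))
    (D : ∀ i, Finset (∀ j, X i j)) (F : ∀ i, (∀ j, X i j) → Bool) (μ : ∀ i, (∀ j, X i j) → ℝ) :
    0 ≤ discM A S D F μ :=
  (abs_nonneg _).trans (abs_correlation_le_discM D F μ (isCylinderM_one A S))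

theorem discM_le {A : Finset (Fin m)} {S : Finset (Fin k)}
    {D : ∀ i, Finset (∀ j, X i j)} {F : ∀ i, (∀ j, X i j) → Bool} {μ : ∀ i, (∀ j, X i j) → ℝ}
    {M : ℝ} (h : ∀ χ, IsCylinderM A S χ → |correlation A D F μ χ| ≤ M) :
    discM A S D F μ ≤ M := by
  rw [discM_eq_sSup_correlation]
  refine csSup_le ⟨_, _, isCylinderM_one A S, rfl⟩ ?_
  rintro t ⟨χ, hχ, rfl⟩
  exact h χ hχ

theorem correlation_univ (D : ∀ i, Finset (∀ j, X i j)) (F : ∀ i, (∀ j, X i j) → Bool)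
    (μ : ∀ i, (∀ j, X i j) → ℝ) (χ : (∀ i : (univ : Finset (Fin m)), ∀ j, X i j) → ℝ) :
    correlation univ D F μ χ =
      ∑ y : ∀ i, ∀ j, X i j, (∏ i, signedWeight D F μ i (y i)) * χ (fun i => y i.1) := by
  let e : (∀ i : (univ : Finset (Fin m)), ∀ j, X i j) ≃ ∀ i, ∀ j, X i j :=
    ⟨fun x i => x ⟨i, mem_univ i⟩, fun y i => y i.1, fun _ => rfl, fun _ => rfl⟩
  refine Fintype.sum_equiv e _ _ fun x => ?_
  congr 1
  exact prod_coe_sort univ fun i => signedWeight D F μ i (e x i)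

end Discrepancy

theorem stmt_5_general {m k : ℕ} {X : Fin m → Fin k → Type*} [∀ i j, Fintype (X i j)]
    (S : Finset (Fin k))
    (D : ∀ i, Finset (∀ j, X i j)) (F : ∀ i, (∀ j, X i j) → Bool)
    (μ μt : ∀ i, (∀ j, X i j) → ℝ) :
    discM Finset.univ S D F μ ≤
      ∑ A : Finset (Fin m),
        discM A S D F μt * ∏ i ∈ Aᶜ, (∑ x : ∀ j, X i j, |μ i x - μt i x|) := by
  refine discM_le fun χ hχ => ?_
  rw [correlation_univ, sum_prod_mul_eq_sum_prod_mul_prod_compl_sub _ (signedWeight D F μt)]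
  refine (abs_sum_le_sum_abs _ _).trans (sum_le_sum fun A _ => ?_)
  let glue (b : ∀ i : {i // i ∉ A}, ∀ j, X i j) (a : ∀ i : A, ∀ j, X i j) :
      ∀ i : (univ : Finset (Fin m)), ∀ j, X i j :=
    fun i => (Equiv.piEquivPiSubtypeProd (· ∈ A) (fun i => ∀ j, X i j)).symm (a, b) i.1
  have hglue : ∀ b j a a', (∀ i j', j' ≠ j → a i j' = a' i j') →
      ∀ i j', j' ≠ j → glue b a i j' = glue b a' i j' := by
    intro b j a a' h i j' hj'
    by_cases hi : i.1 ∈ A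
    · simp [glue, Equiv.piEquivPiSubtypeProd, hi, h ⟨i, hi⟩ j' hj']
    · simp [glue, Equiv.piEquivPiSubtypeProd, hi]
  calc _ ≤ discM A S D F μt * ∏ i ∈ Aᶜ, ∑ y, |signedWeight D F μ i y - signedWeight D F μt i y| :=
        abs_sum_prod_mul_prod_compl_le A _ _ _ fun b =>
          abs_correlation_le_discM D F μt (hχ.comp (glue b) (hglue b))
    _ ≤ _ := by
        gcongr discM A S D F μt * ∏ i ∈ Aᶜ, ∑ y, ?_ with i _ y
        · exact discM_nonneg A S D F μt
        · exact abs_signedWeight_sub_le D F μ μt i y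

/-- continuity of discrepancy, general form. -/
theorem stmt_5 {m k : ℕ} {X : Fin m → Fin k → Type*} [∀ i j, Fintype (X i j)]
    [∀ i j, Nonempty (X i j)] (hm : 0 < m) (hk : 0 < k)
    (S : Finset (Fin k))
    (D : ∀ i, Finset (∀ j, X i j)) (F : ∀ i, (∀ j, X i j) → Bool)
    (μ μt : ∀ i, (∀ j, X i j) → ℝ)
    (hμ0 : ∀ i x, 0 ≤ μ i x) (hμ1 : ∀ i, ∑ x ∈ D i, μ i x = 1)
    (hμs : ∀ i, ∀ x ∉ D i, μ i x = 0)
    (hμt0 : ∀ i x, 0 ≤ μt i x) (hμt1 : ∀ i, ∑ x ∈ D i, μt i x = 1)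
    (hμts : ∀ i, ∀ x ∉ D i, μt i x = 0) :
    discM Finset.univ S D F μ ≤
      ∑ A : Finset (Fin m),
        discM A S D F μt * ∏ i ∈ Aᶜ, (∑ x : ∀ j, X i j, |μ i x - μt i x|) :=
  stmt_5_general S D F μ μt
end

section
/- For any positive integers n, k, ℓ with ℓ ≤ k, the ℓ-party discrepancy of generalized inner product with respect to υ_{n,k,ℓ} satisfies disc_ℓ(GIP_{n,k}, υ_{n,k,ℓ}) ≤ (1 − 1/(2^{ℓ−1} · C(k,≤ℓ)))^n, where C(k,≤ℓ) = Σ_{i=0}^{ℓ} C(k,i). -/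
open Finset

/-- `χ` is an `S`-cylinder intersection on `{0,1}^{n×k}`: a product over `j ∈ S` of
`{0,1}`-valued functions `φ j`, where `φ j` does not depend on the `j`-th column. -/
def IsCylinderOn (n k : ℕ) (S : Finset (Fin k))
    (χ : (Fin n → Fin k → Bool) → ℝ) : Prop :=
  ∃ φ : Fin k → ((Fin n → Fin k → Bool) → ℝ),
    (∀ j ∈ S, ∀ X, φ j X = 0 ∨ φ j X = 1) ∧
    (∀ j ∈ S, ∀ X Y, (∀ i, ∀ j', j' ≠ j → X i j' = Y i j') → φ j X = φ j Y) ∧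
    (∀ X, χ X = ∏ j ∈ S, φ j X)

/-- The `ℓ`-discrepancy of a Boolean function `F` on `{0,1}^{n×k}` with respect to
the distribution `μ`: the maximum over sets `S ⊆ {1,…,k}` with `|S| ≤ ℓ` and
`S`-cylinder intersections `χ` of `|Σ_X (−1)^{F(X)} μ(X) χ(X)|`. -/
noncomputable def discL (n k ℓ : ℕ) (F : (Fin n → Fin k → Bool) → Bool)
    (μ : (Fin n → Fin k → Bool) → ℝ) : ℝ :=
  sSup {t : ℝ | ∃ S : Finset (Fin k), ∃ χ : (Fin n → Fin k → Bool) → ℝ,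
    S.card ≤ ℓ ∧ IsCylinderOn n k S χ ∧
    t = |∑ X : Fin n → Fin k → Bool, (if F X then (-1 : ℝ) else 1) * μ X * χ X|}

/-- Generalized inner product: `GIP_{n,k}(X) = ⊕_{i=1}^n ∧_{j=1}^k X_{i,j}`, i.e.
the parity of the number of all-ones rows of `X`. -/
def GIP (n k : ℕ) (X : Fin n → Fin k → Bool) : Bool :=
  decide ((Finset.univ.filter (fun i : Fin n => ∀ j, X i j = true)).card % 2 = 1)

/-- Hamming weight of `u ∈ {0,1}^k`. -/
def wt {k : ℕ} (u : Fin k → Bool) : ℕ :=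
  (Finset.univ.filter (fun j => u j = true)).card

/-- The distribution `υ_{n,k,ℓ}` on `{0,1}^{n×k}`: the `n` rows are independent, each
uniform on `{u ∈ {0,1}^k : |u| ≥ k−ℓ}`. -/
noncomputable def upsilon (n k ℓ : ℕ) (X : Fin n → Fin k → Bool) : ℝ :=
  ∏ i : Fin n,
    if k - ℓ ≤ wt (X i) then
      (1 : ℝ) / (Finset.univ.filter (fun u : Fin k → Bool => k - ℓ ≤ wt u)).card
    else 0

/-!
Write `(-1)^GIP(X) · υ(X) = ∏ᵢ w(Xᵢ)` with a signed row weight `w`, and split `w = p + q`, where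
`p` is the part of `w` supported on the rows that are all ones outside `S`. Expanding the product
over the set `A` of rows taking the `p` part, the `q`-rows are bounded in absolute value (total
mass `(N - 2^s)/N` per row, `s = |S|`, `N = C(k, ≤ℓ)`), while on the `p`-rows the sum is, up to
the factor `(2^s/N)^|A|`, the correlation of `(-1)^GIP` on the `A × S` submatrix with an
`S`-cylinder intersection under the uniform distribution. The Babai–Nisan–Szegedy argument (`s`
Cauchy–Schwarz steps, each doubling a combinatorial cube, then an exact evaluation of the full cube
and Bernoulli's inequality) bounds the latter by `(1 - 2/4^s)^|A|`. Each row thus contributes at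
most `2^s(1 - 2/4^s)/N + (N - 2^s)/N = 1 - 2/(2^s N) ≤ 1 - 1/(2^(ℓ-1) N)`.
-/

open scoped BigOperators

namespace GIP

section Expectation

variable {ι β : Type*}

lemma update_funSplitAt_symm [DecidableEq ι] (i₀ : ι) (b b' : β) (y : {i // i ≠ i₀} → β) :
    Function.update ((Equiv.funSplitAt i₀ β).symm (b, y)) i₀ b'
      = (Equiv.funSplitAt i₀ β).symm (b', y) := by
  funext i
  by_cases h : i = i₀
  · subst h; simp
  · simp [h]

variable [Fintype ι] [Fintype β]

lemma sq_expect_le_expect_sq [Nonempty β] (f : β → ℝ) : (𝔼 x, f x) ^ 2 ≤ 𝔼 x, f x ^ 2 := by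
  simpa using Finset.expect_mul_sq_le_sq_mul_sq univ (fun _ => (1 : ℝ)) f

lemma sq_expect_expect_mul_le [Nonempty ι] [Nonempty β] (Ψ h : ι → β → ℝ)
    (hΨ : ∀ a b, |Ψ a b| ≤ 1) : (𝔼 a, 𝔼 b, Ψ a b * h a b) ^ 2 ≤ 𝔼 a, 𝔼 b, h a b ^ 2 := by
  refine (sq_expect_le_expect_sq _).trans <| Finset.expect_le_expect fun a _ =>
    (sq_expect_le_expect_sq _).trans <| Finset.expect_le_expect fun b _ => ?_
  rw [mul_pow]
  exact mul_le_of_le_one_left (sq_nonneg _) (sq_le_one_iff_abs_le_one _ |>.2 (hΨ a b))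

lemma expect_prod_eq_prod_expect [DecidableEq ι] (f : ι → β → ℝ) :
    𝔼 x : ι → β, ∏ i, f i (x i) = ∏ i, 𝔼 b, f i b := by
  simp only [Fintype.expect_eq_sum_div_card, ← Fintype.prod_sum, Finset.prod_div_distrib,
    Fintype.card_fun, Finset.prod_const, Finset.card_univ, Nat.cast_pow]

variable [DecidableEq ι]

lemma expect_funSplitAt (i₀ : ι) (f : (ι → β) → ℝ) :
    𝔼 x, f x = 𝔼 b, 𝔼 y : {i // i ≠ i₀} → β, f ((Equiv.funSplitAt i₀ β).symm (b, y)) := by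
  rw [← Finset.expect_product', Finset.univ_product_univ]
  exact Fintype.expect_equiv (Equiv.funSplitAt i₀ β) _ _ fun x => by
    simp only [Prod.mk.eta, Equiv.symm_apply_apply]

lemma expect_expect_update [Nonempty β] (i₀ : ι) (f : (ι → β) → ℝ) :
    𝔼 x, 𝔼 b, f (Function.update x i₀ b) = 𝔼 x, f x := by
  rw [expect_funSplitAt i₀, expect_funSplitAt i₀ f]
  simp only [update_funSplitAt_symm, Fintype.expect_const]
  exact Finset.expect_comm _ _ _

end Expectation

section Cube

variable {ι κ : Type*} [DecidableEq κ]

def cubeVertex (Y Z : κ → ι → Bool) (z : κ → Bool) : κ → ι → Bool :=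
  fun j => if z j then Z j else Y j

lemma cubeVertex_update_of_eq_false {Y Z : κ → ι → Bool} {z : κ → Bool} {j₀ : κ}
    (hz : z j₀ = false) (u : ι → Bool) :
    cubeVertex Y (Function.update Z j₀ u) z = cubeVertex Y Z z := by
  funext j
  by_cases h : j = j₀
  · subst h; simp [cubeVertex, hz]
  · simp [cubeVertex, Function.update_of_ne h]

lemma cubeVertex_update_update_true {Y Z : κ → ι → Bool} {z : κ → Bool} {j₀ : κ}
    (hz : z j₀ = false) (u : ι → Bool) :
    cubeVertex Y (Function.update Z j₀ u) (Function.update z j₀ true)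
      = cubeVertex (Function.update Y j₀ u) Z z := by
  funext j
  by_cases h : j = j₀
  · subst h; simp [cubeVertex, hz]
  · simp [cubeVertex, Function.update_of_ne h]

variable [Fintype ι] [Fintype κ]

/-- `(-1) ^ GIP` of a Boolean matrix given by its columns `C j`. -/
noncomputable def colSign (C : κ → ι → Bool) : ℝ :=
  ∏ i, if ∀ j, C j i = true then -1 else 1

def cube (T : Finset κ) : Finset (κ → Bool) :=
  univ.filter fun z => ∀ j, z j = true → j ∈ T

lemma mem_cube {T : Finset κ} {z : κ → Bool} : z ∈ cube T ↔ ∀ j, z j = true → j ∈ T := by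
  simp [cube]

lemma eq_false_of_mem_cube {T : Finset κ} {z : κ → Bool} (hz : z ∈ cube T) {j : κ} (hj : j ∉ T) :
    z j = false := by
  by_contra h
  exact hj (mem_cube.1 hz j (by simpa using h))

lemma cube_empty : cube (∅ : Finset κ) = {fun _ => false} := by
  ext z
  simp only [mem_cube, notMem_empty, imp_false, Bool.not_eq_true, mem_singleton]
  exact ⟨fun h => funext h, fun h => h ▸ fun _ => rfl⟩

lemma cube_univ : cube (univ : Finset κ) = univ := by
  ext z; simp [mem_cube]

lemma prod_cube_insert {T : Finset κ} {j₀ : κ} (hj₀ : j₀ ∉ T) (f : (κ → Bool) → ℝ) :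
    ∏ z ∈ cube (insert j₀ T), f z = ∏ z ∈ cube T, (f z * f (Function.update z j₀ true)) := by
  rw [prod_mul_distrib, ← prod_filter_not_mul_prod_filter _ fun z => z j₀ = true]
  congr 1
  · refine prod_congr (ext fun z => ?_) fun _ _ => rfl
    simp only [mem_filter, mem_cube, mem_insert, Bool.not_eq_true]
    refine ⟨fun ⟨h, h₀⟩ j hj => (h j hj).resolve_left ?_, fun h => ⟨fun j hj => .inr (h j hj), ?_⟩⟩
    · rintro rfl; simp_all
    · by_contra h'; exact hj₀ (h j₀ (by simpa using h'))
  · have hupdate : ∀ z : κ → Bool, z j₀ = true →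
        Function.update (Function.update z j₀ false) j₀ true = z := fun z hz => by
      rw [Function.update_idem, Function.update_eq_self_iff, hz]
    refine prod_nbij' (fun z => Function.update z j₀ false) (fun z => Function.update z j₀ true)
      (fun z hz => ?_) (fun z hz => ?_) (fun z hz => ?_) (fun z hz => ?_) (fun z hz => ?_)
    · rw [mem_filter, mem_cube] at hz
      rw [mem_cube]
      intro j hj
      have h : j ≠ j₀ := by rintro rfl; simp at hj
      rw [Function.update_of_ne h] at hj
      exact (mem_insert.1 (hz.1 j hj)).resolve_left h
    · rw [mem_cube] at hz
      rw [mem_filter, mem_cube]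
      refine ⟨fun j hj => ?_, by simp⟩
      by_cases h : j = j₀
      · exact h ▸ mem_insert_self _ _
      · rw [Function.update_of_ne h] at hj
        exact mem_insert_of_mem (hz j hj)
    · exact hupdate z (mem_filter.1 hz).2
    · simp [eq_false_of_mem_cube hz hj₀]
    · rw [hupdate z (mem_filter.1 hz).2]

end Cube

section CubeAverage

variable {ι κ : Type*} [Fintype ι] [Fintype κ] [DecidableEq κ]
  (φ : κ → (κ → ι → Bool) → ℝ)

noncomputable def cubeTerm (T : Finset κ) (C : κ → ι → Bool) : ℝ :=
  colSign C * ∏ j ∈ Tᶜ, φ j C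

lemma cubeTerm_eq_mul_cubeTerm_insert {T : Finset κ} {j₀ : κ} (hj₀ : j₀ ∉ T)
    (C : κ → ι → Bool) : cubeTerm φ T C = φ j₀ C * cubeTerm φ (insert j₀ T) C := by
  rw [cubeTerm, cubeTerm, compl_insert, ← mul_prod_erase _ _ (mem_compl.2 hj₀)]
  ring

variable [DecidableEq ι]

noncomputable def cubeAvg (T : Finset κ) : ℝ :=
  𝔼 Y, 𝔼 Z, ∏ z ∈ cube T, cubeTerm φ T (cubeVertex Y Z z)

variable {φ}

/-- One Cauchy–Schwarz step: averaging over the column `j₀` of `Y` removes the factor `φ j₀`,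
which does not depend on that column, at the price of doubling the cube in direction `j₀`. -/
lemma cubeAvg_sq_le_cubeAvg_insert (hφ : ∀ j C, |φ j C| ≤ 1)
    (hφ_indep : ∀ j C C', (∀ j' ≠ j, C j' = C' j') → φ j C = φ j C')
    {T : Finset κ} {j₀ : κ} (hj₀ : j₀ ∉ T) :
    cubeAvg φ T ^ 2 ≤ cubeAvg φ (insert j₀ T) := by
  set e := (Equiv.funSplitAt j₀ (ι → Bool)).symm
  set Ψ := fun W Z => ∏ z ∈ cube T, φ j₀ (cubeVertex (e (default, W)) Z z)
  set H := fun u W Z => ∏ z ∈ cube T, cubeTerm φ (insert j₀ T) (cubeVertex (e (u, W)) Z z)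
  set K := fun u W Z =>
    ∏ z ∈ cube (insert j₀ T), cubeTerm φ (insert j₀ T) (cubeVertex (e (u, W)) Z z)
  have hsplit : ∀ u W Z,
      ∏ z ∈ cube T, cubeTerm φ T (cubeVertex (e (u, W)) Z z) = Ψ W Z * H u W Z := by
    intro u W Z
    simp only [Ψ, H, ← prod_mul_distrib, cubeTerm_eq_mul_cubeTerm_insert φ hj₀]
    refine prod_congr rfl fun z _ => congrArg (· * _) (hφ_indep _ _ _ fun j hj => ?_)
    simp [e, cubeVertex, hj]
  have hdouble : ∀ u u' W Z, H u W Z * H u' W Z = K u W (Function.update Z j₀ u') := by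
    intro u u' W Z
    simp only [H, K, prod_cube_insert hj₀, prod_mul_distrib]
    congr 1 <;> refine prod_congr rfl fun z hz => ?_
    · rw [cubeVertex_update_of_eq_false (eq_false_of_mem_cube hz hj₀)]
    · rw [cubeVertex_update_update_true (eq_false_of_mem_cube hz hj₀), update_funSplitAt_symm]
  have hΨ : ∀ W Z, |Ψ W Z| ≤ 1 := fun W Z => by
    rw [abs_prod]
    exact prod_le_one (fun _ _ => abs_nonneg _) fun _ _ => hφ _ _
  calc cubeAvg φ T ^ 2 = (𝔼 W, 𝔼 Z, Ψ W Z * 𝔼 u, H u W Z) ^ 2 := by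
        have h : cubeAvg φ T = 𝔼 u, 𝔼 W, 𝔼 Z, Ψ W Z * H u W Z :=
          (expect_funSplitAt j₀ _).trans <| Finset.expect_congr rfl fun u _ =>
            Finset.expect_congr rfl fun W _ => Finset.expect_congr rfl fun Z _ => hsplit u W Z
        rw [h, Finset.expect_comm]
        congr 1
        refine Finset.expect_congr rfl fun W _ => ?_
        rw [Finset.expect_comm]
        simp only [Finset.mul_expect]
    _ ≤ 𝔼 W, 𝔼 Z, (𝔼 u, H u W Z) ^ 2 := sq_expect_expect_mul_le _ _ hΨ
    _ = 𝔼 W, 𝔼 Z, 𝔼 u, 𝔼 u', K u W (Function.update Z j₀ u') := by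
        simp only [sq, Fintype.expect_mul_expect, hdouble]
    _ = 𝔼 W, 𝔼 u, 𝔼 Z, K u W Z := Finset.expect_congr rfl fun W _ => by
        rw [Finset.expect_comm]
        exact Finset.expect_congr rfl fun u _ => expect_expect_update j₀ (K u W)
    _ = cubeAvg φ (insert j₀ T) := by
        rw [Finset.expect_comm]
        exact (expect_funSplitAt j₀ fun Y => 𝔼 Z,
          ∏ z ∈ cube (insert j₀ T), cubeTerm φ (insert j₀ T) (cubeVertex Y Z z)).symm

end CubeAverage

section FullCube

variable {κ : Type*} [Fintype κ] [DecidableEq κ]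

lemma prod_sign_and_select (y z : κ → Bool) :
    ∏ w : κ → Bool, (if ∀ j, (if w j then z j else y j) = true then (-1 : ℝ) else 1)
      = if ∀ j, y j = !z j then -1 else 1 := by
  split_ifs with hyz
  · obtain rfl : y = fun j => !z j := funext hyz
    have key : ∀ w, (∀ j, (if w j then z j else !z j) = true) ↔ z = w := fun w => by
      rw [funext_iff]
      exact forall_congr' fun j => by cases w j <;> cases z j <;> simp
    simp only [key, prod_ite_eq, mem_univ, if_true]
  · obtain ⟨j, hj⟩ := not_forall.1 hyz
    have hyz : y j = z j := by revert hj; cases y j <;> cases z j <;> decide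
    cases hz : z j
    · exact prod_eq_one fun w _ => if_neg fun h => by
        have := h j; revert this; cases w j <;> simp [hz, hyz]
    · have hflip : ∀ w : κ → Bool, ((∀ j', (if Function.update w j (!w j) j' then z j' else y j')
          = true) ↔ ∀ j', (if w j' then z j' else y j') = true) := fun w => by
        refine forall_congr' fun j' => ?_
        by_cases h : j' = j
        · subst h; cases w j' <;> simp [hz, hyz]
        · rw [Function.update_of_ne h]
      refine prod_involution (fun w _ => Function.update w j (!w j)) (fun w _ => ?_)
        (fun w _ _ h => ?_) (fun _ _ => mem_univ _) (fun w _ => by simp)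
      · simp only [hflip]; split_ifs <;> norm_num
      · simpa using congrFun h j

lemma expect_ite_eq_neg_one {β : Type*} [Fintype β] [DecidableEq β] (b₀ : β) :
    𝔼 b : β, (if b = b₀ then (-1 : ℝ) else 1) = 1 - 2 / Fintype.card β := by
  have hcard : (1 : ℝ) ≤ Fintype.card β := by exact_mod_cast Fintype.card_pos_iff.2 ⟨b₀⟩
  rw [Fintype.expect_eq_sum_div_card, sum_ite, filter_eq', filter_ne']
  simp only [mem_univ, if_true, sum_const, card_singleton, card_erase_of_mem, card_univ,
    nsmul_eq_mul, mul_one, Nat.cast_sub (Fintype.card_pos_iff.2 ⟨b₀⟩), Nat.cast_one]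
  field_simp
  ring

end FullCube

section UniformBound

variable {ι κ : Type*} [Fintype ι] [Fintype κ] [DecidableEq ι] [DecidableEq κ]
  {φ : κ → (κ → ι → Bool) → ℝ}

lemma cubeAvg_empty : cubeAvg φ ∅ = 𝔼 C, colSign C * ∏ j, φ j C := by
  have hvertex : ∀ Y Z : κ → ι → Bool, cubeVertex Y Z (fun _ => false) = Y := fun _ _ => rfl
  simp [cubeAvg, cube_empty, cubeTerm, hvertex]

lemma cubeAvg_univ : cubeAvg φ univ = (1 - 2 / 2 ^ Fintype.card κ) ^ Fintype.card ι := by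
  have hrow : ∀ Y Z : κ → ι → Bool, ∏ z ∈ cube univ, cubeTerm φ univ (cubeVertex Y Z z)
      = ∏ i, (if ∀ j, Y j i = !Z j i then -1 else 1) := fun Y Z => by
    simp only [cube_univ, cubeTerm, compl_univ, prod_empty, mul_one, colSign]
    rw [prod_comm]
    refine prod_congr rfl fun i _ => ?_
    simp only [cubeVertex, ite_apply]
    exact prod_sign_and_select _ _
  have hrowAvg : ∀ y : κ → Bool, 𝔼 z : κ → Bool, (if ∀ j, y j = !z j then (-1 : ℝ) else 1)
      = 1 - 2 / 2 ^ Fintype.card κ := fun y => by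
    have hiff : ∀ z : κ → Bool, (∀ j, y j = !z j) ↔ z = fun j => !y j := fun z => by
      rw [funext_iff]
      exact forall_congr' fun j => by cases y j <;> cases z j <;> simp
    simp only [hiff, expect_ite_eq_neg_one, Fintype.card_fun, Fintype.card_bool, Nat.cast_pow,
      Nat.cast_ofNat]
  have hZ : ∀ Y : κ → ι → Bool, 𝔼 Z : κ → ι → Bool,
      ∏ i, (if ∀ j, Y j i = !Z j i then (-1 : ℝ) else 1)
        = (1 - 2 / 2 ^ Fintype.card κ) ^ Fintype.card ι := fun Y => by
    rw [← Fintype.expect_equiv (Equiv.piComm fun (_ : ι) (_ : κ) => Bool)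
      (fun Z => ∏ i, (if ∀ j, Y j i = !Z i j then (-1 : ℝ) else 1)) _ fun _ => rfl]
    refine (expect_prod_eq_prod_expect fun i (z : κ → Bool) =>
      if ∀ j, Y j i = !z j then (-1 : ℝ) else 1).trans ?_
    simp only [hrowAvg, prod_const, card_univ]
  simp only [cubeAvg, hrow, hZ, Fintype.expect_const]

lemma abs_cubeAvg_empty_pow_le (hφ : ∀ j C, |φ j C| ≤ 1)
    (hφ_indep : ∀ j C C', (∀ j' ≠ j, C j' = C' j') → φ j C = φ j C') (T : Finset κ) :
    |cubeAvg φ ∅| ^ 2 ^ #T ≤ |cubeAvg φ T| := by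
  induction T using Finset.induction_on with
  | empty => simp
  | insert j₀ T hj₀ ih =>
    rw [card_insert_of_notMem hj₀, pow_succ, pow_mul]
    calc (|cubeAvg φ ∅| ^ 2 ^ #T) ^ 2 ≤ |cubeAvg φ T| ^ 2 := by gcongr
      _ = cubeAvg φ T ^ 2 := sq_abs _
      _ ≤ cubeAvg φ (insert j₀ T) := cubeAvg_sq_le_cubeAvg_insert hφ hφ_indep hj₀
      _ ≤ |cubeAvg φ (insert j₀ T)| := le_abs_self _

lemma one_sub_two_div_le_pow (s : ℕ) :
    1 - 2 / (2 : ℝ) ^ s ≤ (1 - 2 / 4 ^ s) ^ 2 ^ s := by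
  have h4 : (4 : ℝ) ^ s = 2 ^ s * 2 ^ s := by rw [← mul_pow]; norm_num
  have hbern := one_add_mul_le_pow (a := -2 / (4 : ℝ) ^ s) ?_ (2 ^ s)
  · calc 1 - 2 / (2 : ℝ) ^ s = 1 + ((2 ^ s : ℕ) : ℝ) * (-2 / 4 ^ s) := by
          push_cast; rw [h4]; field_simp; ring
      _ ≤ (1 + -2 / 4 ^ s) ^ 2 ^ s := hbern
      _ = (1 - 2 / 4 ^ s) ^ 2 ^ s := by ring
  · have h1 : (1 : ℝ) ≤ 2 ^ s := one_le_pow₀ (by norm_num)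
    rw [h4, neg_div, neg_le_neg_iff, div_le_iff₀ (by positivity)]
    nlinarith

/-- The Babai–Nisan–Szegedy bound for `GIP` under the uniform distribution. -/
theorem abs_expect_colSign_mul_prod_le [Nonempty κ] (hφ : ∀ j C, |φ j C| ≤ 1)
    (hφ_indep : ∀ j C C', (∀ j' ≠ j, C j' = C' j') → φ j C = φ j C') :
    |𝔼 C, colSign C * ∏ j, φ j C| ≤ (1 - 2 / 4 ^ Fintype.card κ) ^ Fintype.card ι := by
  set s := Fintype.card κ
  have hs : 1 ≤ s := Fintype.card_pos
  have hbase : 0 ≤ 1 - 2 / (4 : ℝ) ^ s := by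
    rw [sub_nonneg, div_le_one (by positivity)]
    exact le_trans (by norm_num) (le_self_pow₀ (by norm_num : (1 : ℝ) ≤ 4) (by omega))
  have hcube : 0 ≤ 1 - 2 / (2 : ℝ) ^ s := by
    rw [sub_nonneg, div_le_one (by positivity)]
    exact le_self_pow₀ (by norm_num : (1 : ℝ) ≤ 2) (by omega)
  rw [← pow_le_pow_iff_left₀ (abs_nonneg _) (by positivity) (pow_ne_zero s two_ne_zero)]
  calc |𝔼 C, colSign C * ∏ j, φ j C| ^ 2 ^ s = |cubeAvg φ ∅| ^ 2 ^ #(univ : Finset κ) := by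
        rw [cubeAvg_empty, card_univ]
    _ ≤ |cubeAvg φ univ| := abs_cubeAvg_empty_pow_le hφ hφ_indep univ
    _ = (1 - 2 / 2 ^ s) ^ Fintype.card ι := by rw [cubeAvg_univ, abs_of_nonneg (by positivity)]
    _ ≤ ((1 - 2 / 4 ^ s) ^ 2 ^ s) ^ Fintype.card ι := by gcongr; exact one_sub_two_div_le_pow s
    _ = ((1 - 2 / 4 ^ s) ^ Fintype.card ι) ^ 2 ^ s := by rw [← pow_mul, ← pow_mul, mul_comm]

end UniformBound

section RowExpansion

variable {ι β : Type*} [Fintype ι] [DecidableEq ι] [Fintype β]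

lemma abs_sum_prod_mul_prod_compl_mul_le (p q : β → ℝ) (Φ : (ι → β) → ℝ) (c : ℝ) (A : Finset ι)
    (h : ∀ g : {i // i ∉ A} → β, |∑ f : {i // i ∈ A} → β, (∏ i, p (f i)) *
        Φ ((Equiv.piEquivPiSubtypeProd (· ∈ A) fun _ => β).symm (f, g))| ≤ c ^ #A) :
    |∑ X : ι → β, (∏ i ∈ A, p (X i)) * (∏ i ∈ Aᶜ, q (X i)) * Φ X|
      ≤ c ^ #A * (∑ b, |q b|) ^ (Fintype.card ι - #A) := by
  set e := (Equiv.piEquivPiSubtypeProd (· ∈ A) fun _ => β).symm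
  have hsplit : ∑ X : ι → β, (∏ i ∈ A, p (X i)) * (∏ i ∈ Aᶜ, q (X i)) * Φ X
      = ∑ g : {i // i ∉ A} → β, (∏ i, q (g i)) * ∑ f, (∏ i, p (f i)) * Φ (e (f, g)) := by
    rw [← e.sum_comp, Fintype.sum_prod_type, sum_comm]
    refine sum_congr rfl fun g _ => ?_
    rw [mul_sum]
    refine sum_congr rfl fun f _ => ?_
    have hA : ∏ i ∈ A, p (e (f, g) i) = ∏ i, p (f i) := by
      rw [← prod_coe_sort A]
      simp [e]
    have hAc : ∏ i ∈ Aᶜ, q (e (f, g) i) = ∏ i, q (g i) := by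
      rw [prod_subtype (F := inferInstance) Aᶜ (p := (· ∉ A)) fun _ => mem_compl]
      exact prod_congr rfl fun i _ => by simp [e, i.2]
    rw [hA, hAc]
    ring
  have hcard : Fintype.card {i // i ∉ A} = Fintype.card ι - #A := by
    rw [Fintype.card_subtype_compl, Fintype.card_coe]
  have hq : ∑ g : {i // i ∉ A} → β, ∏ i, |q (g i)| = (∑ b, |q b|) ^ (Fintype.card ι - #A) := by
    rw [← Fintype.prod_sum fun (_ : {i // i ∉ A}) (b : β) => |q b|, prod_const, card_univ, hcard]
  rw [hsplit, ← hq, mul_sum]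
  refine (abs_sum_le_sum_abs _ _).trans (sum_le_sum fun g _ => ?_)
  rw [abs_mul, abs_prod, mul_comm]
  exact mul_le_mul_of_nonneg_right (h g) (prod_nonneg fun _ _ => abs_nonneg _)

theorem abs_sum_prod_add_mul_le (p q : β → ℝ) (Φ : (ι → β) → ℝ) (c : ℝ)
    (h : ∀ (A : Finset ι) (g : {i // i ∉ A} → β), |∑ f : {i // i ∈ A} → β, (∏ i, p (f i)) *
        Φ ((Equiv.piEquivPiSubtypeProd (· ∈ A) fun _ => β).symm (f, g))| ≤ c ^ #A) :
    |∑ X : ι → β, (∏ i, (p (X i) + q (X i))) * Φ X| ≤ (c + ∑ b, |q b|) ^ Fintype.card ι := by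
  simp only [Fintype.prod_add, sum_mul]
  rw [sum_comm, ← Fintype.sum_pow_mul_eq_add_pow]
  exact (abs_sum_le_sum_abs _ _).trans <| sum_le_sum fun A _ =>
    abs_sum_prod_mul_prod_compl_mul_le p q Φ c A (h A)

end RowExpansion

section Rows

variable {k : ℕ}

noncomputable def rowSign (u : Fin k → Bool) : ℝ :=
  if ∀ j, u j = true then -1 else 1

lemma gip_sign_eq_prod_rowSign {n : ℕ} (X : Fin n → Fin k → Bool) :
    (if GIP n k X then (-1 : ℝ) else 1) = ∏ i, rowSign (X i) := by
  simp only [rowSign, prod_ite, prod_const, one_pow, mul_one, GIP, decide_eq_true_eq]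
  rcases Nat.mod_two_eq_zero_or_one #{i | ∀ j, X i j = true} with h | h
  · rw [if_neg (by omega), Even.neg_one_pow (Nat.even_iff.2 h)]
  · rw [if_pos h, Odd.neg_one_pow (Nat.odd_iff.2 h)]

/-- The rows on which the `AND` only depends on the columns in `S`. -/
def onesOutside (S : Finset (Fin k)) : Finset (Fin k → Bool) :=
  univ.filter fun u => ∀ j ∉ S, u j = true

def padRow (S : Finset (Fin k)) (v : {j // j ∈ S} → Bool) : Fin k → Bool :=
  fun j => if h : j ∈ S then v ⟨j, h⟩ else true

variable {S : Finset (Fin k)}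

lemma mem_onesOutside {u : Fin k → Bool} : u ∈ onesOutside S ↔ ∀ j ∉ S, u j = true := by
  simp [onesOutside]

lemma padRow_mem_onesOutside (v : {j // j ∈ S} → Bool) : padRow S v ∈ onesOutside S :=
  mem_onesOutside.2 fun j hj => by simp [padRow, hj]

lemma padRow_restrict {u : Fin k → Bool} (hu : u ∈ onesOutside S) :
    padRow S (fun j => u j) = u := by
  funext j
  by_cases hj : j ∈ S
  · simp [padRow, hj]
  · simp [padRow, hj, mem_onesOutside.1 hu j hj]

lemma padRow_injective : Function.Injective (padRow S) := fun v v' h => funext fun j => by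
  simpa [padRow] using congrFun h j

lemma card_onesOutside : #(onesOutside S) = 2 ^ #S := by
  have : onesOutside S = univ.image (padRow S) := by
    ext u
    refine ⟨fun hu => mem_image.2 ⟨_, mem_univ _, padRow_restrict hu⟩, fun hu => ?_⟩
    obtain ⟨v, -, rfl⟩ := mem_image.1 hu
    exact padRow_mem_onesOutside v
  simp [this, card_image_of_injective _ padRow_injective]

lemma rowSign_padRow (v : {j // j ∈ S} → Bool) :
    rowSign (padRow S v) = if ∀ j, v j = true then -1 else 1 := by
  have : (∀ j, padRow S v j = true) ↔ ∀ j, v j = true :=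
    ⟨fun h j => by simpa [padRow] using h j,
      fun h j => by by_cases hj : j ∈ S <;> simp [padRow, hj, h]⟩
  simp only [rowSign, this]

lemma sub_card_le_wt {u : Fin k → Bool} (hu : u ∈ onesOutside S) : k - #S ≤ wt u := by
  calc k - #S = #Sᶜ := by rw [card_compl, Fintype.card_fin]
    _ ≤ wt u := card_le_card fun j hj => by
      simpa using mem_onesOutside.1 hu j (mem_compl.1 hj)

end Rows

section Weights

variable (k ℓ : ℕ)

/-- The support of a row of `υ_{n,k,ℓ}`. -/
def heavyRows : Finset (Fin k → Bool) :=
  univ.filter fun u => k - ℓ ≤ wt u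

noncomputable def rowWeight (u : Fin k → Bool) : ℝ :=
  if k - ℓ ≤ wt u then 1 / #(heavyRows k ℓ) else 0

noncomputable def signedWeight (u : Fin k → Bool) : ℝ :=
  rowSign u * rowWeight k ℓ u

lemma gip_sign_mul_upsilon {n : ℕ} (X : Fin n → Fin k → Bool) :
    (if GIP n k X then (-1 : ℝ) else 1) * upsilon n k ℓ X = ∏ i, signedWeight k ℓ (X i) := by
  rw [gip_sign_eq_prod_rowSign, upsilon, ← prod_mul_distrib]
  rfl

lemma card_heavyRows_pos : 0 < #(heavyRows k ℓ) :=
  card_pos.2 ⟨fun _ => true, by simp [heavyRows, wt]⟩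

lemma card_heavyRows : #(heavyRows k ℓ) = ∑ i ∈ range (ℓ + 1), k.choose i := by
  have hzeros : ∀ u : Fin k → Bool, wt u + #(univ.filter fun j => u j = false) = k := fun u => by
    simpa [wt] using card_filter_add_card_filter_not (s := univ) fun j => u j = true
  calc #(heavyRows k ℓ) = #((univ : Finset (Finset (Fin k))).filter (#· ≤ ℓ)) := by
        refine card_nbij' (fun u => univ.filter fun j => u j = false) (fun T j => decide (j ∉ T))
          (fun u hu => ?_) (fun T hT => ?_) (fun u _ => ?_) (fun T _ => ?_)
        · have := hzeros u
          simp only [heavyRows, coe_filter, Set.mem_ofPred_eq, mem_univ, true_and] at hu ⊢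
          omega
        · have := hzeros fun j => decide (j ∉ T)
          simp only [coe_filter, Set.mem_ofPred_eq, mem_univ, true_and, heavyRows] at hT ⊢
          simp only [decide_eq_false_iff_not, not_not, filter_mem_eq_inter, univ_inter] at this
          omega
        · funext j; cases h : u j <;> simp [h]
        · ext j; simp
    _ = ∑ i ∈ range (ℓ + 1), #(powersetCard i (univ : Finset (Fin k))) := by
        rw [card_eq_sum_card_fiberwise (f := card) (t := range (ℓ + 1)) fun T hT => by
          simpa [Nat.lt_succ_iff] using hT]
        refine sum_congr rfl fun i hi => congrArg card (ext fun T => ?_)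
        simp only [mem_filter, mem_univ, true_and, mem_powersetCard, subset_univ]
        constructor
        · exact And.right
        · rintro rfl; exact ⟨by simpa [Nat.lt_succ_iff] using hi, rfl⟩
    _ = ∑ i ∈ range (ℓ + 1), k.choose i := by simp [card_powersetCard]

end Weights

section Discrepancy

variable {k ℓ : ℕ} {S : Finset (Fin k)}

noncomputable def freeWeight (k ℓ : ℕ) (S : Finset (Fin k)) (u : Fin k → Bool) : ℝ :=
  if u ∈ onesOutside S then signedWeight k ℓ u else 0

noncomputable def restWeight (k ℓ : ℕ) (S : Finset (Fin k)) (u : Fin k → Bool) : ℝ :=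
  if u ∈ onesOutside S then 0 else signedWeight k ℓ u

lemma onesOutside_subset_heavyRows (hSℓ : #S ≤ ℓ) : onesOutside S ⊆ heavyRows k ℓ := fun u hu =>
  mem_filter.2 ⟨mem_univ u, (Nat.sub_le_sub_left hSℓ k).trans (sub_card_le_wt hu)⟩

lemma rowWeight_of_mem_onesOutside (hSℓ : #S ≤ ℓ) {u : Fin k → Bool} (hu : u ∈ onesOutside S) :
    rowWeight k ℓ u = 1 / #(heavyRows k ℓ) :=
  if_pos (mem_filter.1 (onesOutside_subset_heavyRows hSℓ hu)).2

lemma sum_prod_freeWeight_mul {α : Type*} [Fintype α] [DecidableEq α] (hSℓ : #S ≤ ℓ)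
    (Φ : (α → Fin k → Bool) → ℝ) :
    ∑ f : α → Fin k → Bool, (∏ a, freeWeight k ℓ S (f a)) * Φ f
      = (1 / #(heavyRows k ℓ)) ^ Fintype.card α *
        ∑ C : {j // j ∈ S} → α → Bool, colSign C * Φ fun a => padRow S fun j => C j a := by
  rw [mul_sum]
  refine (sum_of_injOn (fun C a => padRow S fun j => C j a) (fun C _ C' _ h => ?_)
    (fun _ _ => mem_coe.2 (mem_univ _)) (fun f _ hf => ?_) fun C _ => ?_).symm
  · funext j a
    simpa using congrFun (padRow_injective (congrFun h a)) j
  · obtain ⟨a, ha⟩ : ∃ a, f a ∉ onesOutside S := by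
      by_contra! h
      exact hf ⟨fun j a => f a j, by simp, funext fun a => padRow_restrict (h a)⟩
    rw [prod_eq_zero (mem_univ a) (if_neg ha), zero_mul]
  · have hrow : ∀ a, freeWeight k ℓ S (padRow S fun j => C j a)
        = (if ∀ j, C j a = true then -1 else 1) * (1 / #(heavyRows k ℓ)) := fun a => by
      rw [freeWeight, if_pos (padRow_mem_onesOutside _), signedWeight, rowSign_padRow,
        rowWeight_of_mem_onesOutside hSℓ (padRow_mem_onesOutside _)]
    simp only [hrow, prod_mul_distrib, prod_const, card_univ, colSign]
    ring

lemma sum_abs_restWeight (hSℓ : #S ≤ ℓ) :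
    ∑ u, |restWeight k ℓ S u| = (#(heavyRows k ℓ) - 2 ^ #S) / #(heavyRows k ℓ) := by
  have hN : (0 : ℝ) < #(heavyRows k ℓ) := by exact_mod_cast card_heavyRows_pos k ℓ
  have habs : ∀ u, |restWeight k ℓ S u|
      = rowWeight k ℓ u - if u ∈ onesOutside S then (1 : ℝ) / #(heavyRows k ℓ) else 0 := fun u => by
    have hsign : |rowSign u| = 1 := by unfold rowSign; split_ifs <;> simp
    have hw : 0 ≤ rowWeight k ℓ u := by unfold rowWeight; split_ifs <;> positivity
    by_cases hu : u ∈ onesOutside S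
    · simp [restWeight, hu, rowWeight_of_mem_onesOutside hSℓ hu]
    · simp [restWeight, hu, signedWeight, abs_mul, hsign, abs_of_nonneg hw]
  have htotal : ∑ u, rowWeight k ℓ u = 1 := by
    simp only [rowWeight, ← sum_filter, sum_const, nsmul_eq_mul]
    exact mul_one_div_cancel hN.ne'
  simp only [habs, one_div, sum_sub_distrib, htotal, sum_ite_mem, univ_inter, sum_const,
    card_onesOutside, nsmul_eq_mul, Nat.cast_pow, Nat.cast_ofNat]
  field_simp

lemma abs_sum_prod_freeWeight_mul_cylinder_le (hS : S.Nonempty) (hSℓ : #S ≤ ℓ) {n : ℕ}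
    (φ : Fin k → (Fin n → Fin k → Bool) → ℝ) (hφ : ∀ j ∈ S, ∀ X, φ j X = 0 ∨ φ j X = 1)
    (hφ_indep : ∀ j ∈ S, ∀ X Y, (∀ i, ∀ j', j' ≠ j → X i j' = Y i j') → φ j X = φ j Y)
    (A : Finset (Fin n)) (g : {i // i ∉ A} → Fin k → Bool) :
    |∑ f : {i // i ∈ A} → Fin k → Bool, (∏ i, freeWeight k ℓ S (f i)) *
        ∏ j ∈ S, φ j ((Equiv.piEquivPiSubtypeProd (· ∈ A) fun _ => Fin k → Bool).symm (f, g))|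
      ≤ (2 ^ #S * (1 - 2 / 4 ^ #S) / #(heavyRows k ℓ)) ^ #A := by
  set e := (Equiv.piEquivPiSubtypeProd (· ∈ A) fun _ => Fin k → Bool).symm
  set ψ : {j // j ∈ S} → ({j // j ∈ S} → {i // i ∈ A} → Bool) → ℝ :=
    fun j C => φ j (e (fun i => padRow S fun j' => C j' i, g))
  have : Nonempty {j // j ∈ S} := hS.to_subtype
  have hψ : ∀ j C, |ψ j C| ≤ 1 := fun j C => by
    rcases hφ j j.2 (e (fun i => padRow S fun j' => C j' i, g)) with h | h <;> simp [ψ, h]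
  have hψ_indep : ∀ j C C', (∀ j' ≠ j, C j' = C' j') → ψ j C = ψ j C' := fun j C C' h =>
    hφ_indep j j.2 _ _ fun i j' hj' => by
      simp only [e, Equiv.piEquivPiSubtypeProd_symm_apply]
      split_ifs with hi
      · simp only [padRow]
        split_ifs with hj'S
        · rw [h ⟨j', hj'S⟩ fun h' => hj' (congrArg Subtype.val h')]
        · rfl
      · rfl
  have hsum : ∑ C, colSign C * ∏ j ∈ S, φ j (e (fun i => padRow S fun j' => C j' i, g))
      = 2 ^ (#S * #A) * 𝔼 C, colSign C * ∏ j, ψ j C := by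
    have hcard : (Fintype.card ({j // j ∈ S} → {i // i ∈ A} → Bool) : ℝ) = 2 ^ (#S * #A) := by
      simp [← pow_mul, mul_comm]
    rw [Fintype.expect_eq_sum_div_card, hcard, mul_div_cancel₀ _ (by positivity)]
    exact sum_congr rfl fun C _ => by rw [← prod_coe_sort S]
  have hcore := abs_expect_colSign_mul_prod_le hψ hψ_indep
  rw [Fintype.card_coe, Fintype.card_coe] at hcore
  rw [sum_prod_freeWeight_mul hSℓ, hsum, Fintype.card_coe, abs_mul, abs_mul,
    abs_of_nonneg (by positivity), abs_of_nonneg (by positivity)]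
  calc (1 / (#(heavyRows k ℓ) : ℝ)) ^ #A * (2 ^ (#S * #A) * |𝔼 C, colSign C * ∏ j, ψ j C|)
      ≤ (1 / (#(heavyRows k ℓ) : ℝ)) ^ #A * (2 ^ (#S * #A) * (1 - 2 / 4 ^ #S) ^ #A) := by
        gcongr
    _ = (2 ^ #S * (1 - 2 / 4 ^ #S) / #(heavyRows k ℓ)) ^ #A := by
        rw [div_eq_mul_one_div (2 ^ #S * (1 - 2 / 4 ^ #S) : ℝ), mul_pow, mul_pow, ← pow_mul]
        ring

lemma two_pow_mul_add_sub_div_le {N : ℝ} {s ℓ : ℕ} (hN : 0 < N) (hs : 1 ≤ s) (hsℓ : s ≤ ℓ) :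
    2 ^ s * (1 - 2 / 4 ^ s) / N + (N - 2 ^ s) / N ≤ 1 - 1 / (2 ^ (ℓ - 1) * N) := by
  have h4 : (4 : ℝ) ^ s = 2 ^ s * 2 ^ s := by rw [← mul_pow]; norm_num
  have hℓ : (2 : ℝ) ^ ℓ = 2 * 2 ^ (ℓ - 1) := by rw [← pow_succ']; congr 1; omega
  have hsℓ' : (2 : ℝ) ^ s ≤ 2 ^ ℓ := pow_le_pow_right₀ (by norm_num) hsℓ
  rw [h4, ← add_div, div_le_iff₀ hN]
  field_simp
  nlinarith [pow_pos (two_pos : (0 : ℝ) < 2) s, pow_pos (two_pos : (0 : ℝ) < 2) (ℓ - 1)]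

theorem abs_sum_gip_sign_mul_upsilon_mul_cylinder_le (hS : S.Nonempty) (hSℓ : #S ≤ ℓ) {n : ℕ}
    (φ : Fin k → (Fin n → Fin k → Bool) → ℝ) (hφ : ∀ j ∈ S, ∀ X, φ j X = 0 ∨ φ j X = 1)
    (hφ_indep : ∀ j ∈ S, ∀ X Y, (∀ i, ∀ j', j' ≠ j → X i j' = Y i j') → φ j X = φ j Y) :
    |∑ X, (if GIP n k X then (-1 : ℝ) else 1) * upsilon n k ℓ X * ∏ j ∈ S, φ j X|
      ≤ (1 - 1 / (2 ^ (ℓ - 1) * #(heavyRows k ℓ))) ^ n := by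
  have hN : (0 : ℝ) < #(heavyRows k ℓ) := by exact_mod_cast card_heavyRows_pos k ℓ
  have hsN : (2 : ℝ) ^ #S ≤ #(heavyRows k ℓ) := by
    exact_mod_cast card_onesOutside (S := S) ▸ card_le_card (onesOutside_subset_heavyRows hSℓ)
  have hsplit : ∀ X : Fin n → Fin k → Bool,
      (if GIP n k X then (-1 : ℝ) else 1) * upsilon n k ℓ X
        = ∏ i, (freeWeight k ℓ S (X i) + restWeight k ℓ S (X i)) := fun X => by
    rw [gip_sign_mul_upsilon]
    refine prod_congr rfl fun i _ => ?_
    unfold freeWeight restWeight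
    split_ifs <;> ring
  simp only [hsplit]
  refine (abs_sum_prod_add_mul_le _ _ _ _
    (abs_sum_prod_freeWeight_mul_cylinder_le hS hSℓ φ hφ hφ_indep)).trans ?_
  rw [sum_abs_restWeight hSℓ, Fintype.card_fin]
  gcongr
  · have : 0 ≤ 1 - 2 / (4 : ℝ) ^ #S := by
      rw [sub_nonneg, div_le_one (by positivity)]
      exact le_self_pow₀ (by norm_num) (card_pos.2 hS).ne' |>.trans' (by norm_num)
    have : (0 : ℝ) ≤ #(heavyRows k ℓ) - 2 ^ #S := sub_nonneg.2 hsN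
    positivity
  · exact two_pow_mul_add_sub_div_le hN (card_pos.2 hS) hSℓ

end Discrepancy

lemma exists_nonempty_isCylinderOn {n k ℓ : ℕ} (hk : 0 < k) (hℓ : 0 < ℓ) {S : Finset (Fin k)}
    {χ : (Fin n → Fin k → Bool) → ℝ} (hSℓ : #S ≤ ℓ) (hχ : IsCylinderOn n k S χ) :
    ∃ S' : Finset (Fin k), S'.Nonempty ∧ #S' ≤ ℓ ∧ IsCylinderOn n k S' χ := by
  rcases S.eq_empty_or_nonempty with rfl | hS
  · obtain ⟨φ, -, -, hχ⟩ := hχ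
    exact ⟨{⟨0, hk⟩}, singleton_nonempty _, by rwa [card_singleton], fun _ _ => 1, by simp,
      by simp, fun X => by simpa using hχ X⟩
  · exact ⟨S, hS, hSℓ, hχ⟩

end GIP

theorem stmt_7_general (n k ℓ : ℕ) (hk : 0 < k) (hℓ : 0 < ℓ) :
    discL n k ℓ (GIP n k) (upsilon n k ℓ) ≤
      (1 - 1 / ((2 : ℝ) ^ (ℓ - 1) *
        ∑ i ∈ Finset.range (ℓ + 1), (k.choose i : ℝ))) ^ n := by
  have hN : (#(GIP.heavyRows k ℓ) : ℝ) = ∑ i ∈ range (ℓ + 1), (k.choose i : ℝ) := by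
    exact_mod_cast GIP.card_heavyRows k ℓ
  rw [← hN]
  refine Real.sSup_le ?_ ?_
  · rintro t ⟨S, χ, hSℓ, hχ, rfl⟩
    obtain ⟨S', hS', hS'ℓ, φ, hφ, hφ_indep, hχ'⟩ := GIP.exists_nonempty_isCylinderOn hk hℓ hSℓ hχ
    simp only [hχ']
    exact GIP.abs_sum_gip_sign_mul_upsilon_mul_cylinder_le hS' hS'ℓ φ hφ hφ_indep
  · have hN1 : (1 : ℝ) ≤ 2 ^ (ℓ - 1) * #(GIP.heavyRows k ℓ) :=
      one_le_mul_of_one_le_of_one_le (one_le_pow₀ (by norm_num))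
        (by exact_mod_cast GIP.card_heavyRows_pos k ℓ)
    exact pow_nonneg (sub_nonneg.2 ((div_le_one (by positivity)).2 hN1)) n

/-- discrepancy bound for generalized inner product. -/
theorem stmt_7 (n k ℓ : ℕ) (hn : 0 < n) (hk : 0 < k) (hℓ : 0 < ℓ) (hℓk : ℓ ≤ k) :
    discL n k ℓ (GIP n k) (upsilon n k ℓ) ≤
      (1 - 1 / ((2 : ℝ) ^ (ℓ - 1) *
        ∑ i ∈ Finset.range (ℓ + 1), (k.choose i : ℝ))) ^ n :=
  stmt_7_general n k ℓ hk hℓ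
end

section
/- Let n and k be positive integers. For every cylinder intersection χ : {0,1}^{n×k} → {0,1}, | (1/2^{nk}) Σ_{X ∈ {0,1}^{n×k}} e( (1/3) Σ_{i=1}^n (X_{i,1} ⊕ X_{i,2} ⊕ ⋯ ⊕ X_{i,k}) ) · χ(X) | < exp(−n/4^k), where e(t) = exp(2πit) with i the imaginary unit, and |·| denotes the complex absolute value. -/
/-
Think of `f : {0,1}^{n×k} → ℂ` as a function of its `k` columns. Its box sum `B(f)` (see
`BoxNorm.boxSum`) is `N²` times the `2^k`-th power of its Gowers box norm, `N = 2^{nk}`. One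
Cauchy–Schwarz step in a column `a` removes the factor of the cylinder intersection that ignores
column `a`, replacing `f` by `x ↦ f(x[a ↦ u]) · conj f(x[a ↦ v])`; Jensen's inequality over
`(u, v)` and induction on the set of columns give `(|∑ f χ| / N)^{2^k} ≤ B(f) / N²`.

For `f = e((1/3) ∑_i rowXor(X_i))` the box sum factors over the rows. Within one row the
factors indexed by `T` and `T ∪ {j}` cancel when the two rows `x, y` agree in column `j`, so
only `y = ¬x` gives a term other than `1`: `ω^{2^{k-1}}` or its conjugate according to the
parity of `x`, where `ω = e(1/3)`. A row thus contributes `4^k - 2^k - 2^{k-1}`, and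
`(1 - 3/2^{k+1})^n < exp(-n/2^k)`.
-/

open Finset

/-- `e(t) = exp(2πit)`. -/
noncomputable def eFn (t : ℂ) : ℂ := Complex.exp (2 * Real.pi * Complex.I * t)

/-- The XOR `X_{i,1} ⊕ ⋯ ⊕ X_{i,k}` of the entries of row `i`, as `0` or `1`. -/
def rowXor {k : ℕ} (u : Fin k → Bool) : ℕ :=
  (Finset.univ.filter (fun j => u j = true)).card % 2

open Function ComplexConjugate
open scoped ComplexOrder

lemma pow_sum_div_card_le_sum_pow_div_card {ι : Type*} [Fintype ι] [Nonempty ι]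
    {t : ι → ℝ} (ht : ∀ i, 0 ≤ t i) (m : ℕ) :
    ((∑ i, t i) / Fintype.card ι) ^ m ≤ (∑ i, t i ^ m) / Fintype.card ι := by
  cases m with
  | zero => simp
  | succ m =>
    rw [div_pow, pow_succ (Fintype.card ι : ℝ), ← div_div]
    gcongr
    exact pow_sum_div_card_le_sum_pow (fun i _ => ht i) m

namespace BoxNorm

lemma conj_pow_succ_apply (m : ℕ) (z : ℂ) :
    (conj ^ (m + 1) : ℂ →+* ℂ) z = conj ((conj ^ m : ℂ →+* ℂ) z) := by
  rw [pow_succ']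
  rfl

lemma conj_pow_apply_conj (m : ℕ) (z : ℂ) :
    (conj ^ m : ℂ →+* ℂ) (conj z) = conj ((conj ^ m : ℂ →+* ℂ) z) := by
  rw [← conj_pow_succ_apply, pow_succ]
  rfl

lemma norm_conj_pow_apply (m : ℕ) (z : ℂ) : ‖(conj ^ m : ℂ →+* ℂ) z‖ = ‖z‖ := by
  induction m with
  | zero => rfl
  | succ m ih => rw [conj_pow_succ_apply, Complex.norm_conj, ih]

lemma conj_pow_apply_eq_mod_two (m : ℕ) (z : ℂ) :
    (conj ^ m : ℂ →+* ℂ) z = (conj ^ (m % 2) : ℂ →+* ℂ) z := by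
  conv_lhs => rw [← Nat.mod_add_div m 2, pow_add, pow_mul]
  simp [sq, RingHom.mul_def]

lemma prod_powerset_insert_conj_pow {κ : Type*} [DecidableEq κ] {S : Finset κ} {a : κ}
    (ha : a ∉ S) (F : Finset κ → ℂ) :
    ∏ T ∈ (insert a S).powerset, (conj ^ T.card : ℂ →+* ℂ) (F T) =
      (∏ T ∈ S.powerset, (conj ^ T.card : ℂ →+* ℂ) (F T)) *
        conj (∏ T ∈ S.powerset, (conj ^ T.card : ℂ →+* ℂ) (F (insert a T))) := by
  rw [Finset.prod_powerset_insert ha, map_prod]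
  congr 1
  refine Finset.prod_congr rfl fun T hT => ?_
  rw [Finset.card_insert_of_notMem fun h => ha (Finset.mem_powerset.1 hT h), conj_pow_succ_apply]

section

variable {κ : Type*} [DecidableEq κ] {β : κ → Type*} {a : κ}

def mulDeriv (a : κ) (u v : β a) (g : (∀ j, β j) → ℂ) (x : ∀ j, β j) : ℂ :=
  g (update x a u) * conj (g (update x a v))

lemma dependsOn_mulDeriv {g : (∀ j, β j) → ℂ} {s : Set κ} (hg : DependsOn g s) (u v : β a) :
    DependsOn (mulDeriv a u v g) s := by
  have hupd : ∀ ⦃x y : ∀ j, β j⦄, (∀ j ∈ s, x j = y j) → ∀ w : β a,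
      ∀ j ∈ s, update x a w j = update y a w j := fun x y hxy w j hj => by
    rcases eq_or_ne j a with rfl | hja
    · simp
    · simp [hja, hxy j hj]
  exact fun x y hxy => by rw [mulDeriv, mulDeriv, hg (hupd hxy u), hg (hupd hxy v)]

lemma norm_mulDeriv_le_one {g : (∀ j, β j) → ℂ} (hg : ∀ x, ‖g x‖ ≤ 1) (u v : β a)
    (x : ∀ j, β j) : ‖mulDeriv a u v g x‖ ≤ 1 := by
  rw [mulDeriv, norm_mul, Complex.norm_conj]
  exact mul_le_one₀ (hg _) (norm_nonneg _) (hg _)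

def boxFiber (a : κ) (S : Finset κ) (f : (∀ j, β j) → ℂ) (x y : ∀ j, β j) (u : β a) : ℂ :=
  ∏ T ∈ S.powerset, (conj ^ T.card : ℂ →+* ℂ) (f (update (T.piecewise y x) a u))

lemma boxFiber_congr {S : Finset κ} (f : (∀ j, β j) → ℂ) {x x' y y' : ∀ j, β j}
    (hx : ∀ j ≠ a, x j = x' j) (hy : ∀ j ≠ a, y j = y' j) (u : β a) :
    boxFiber a S f x y u = boxFiber a S f x' y' u := by
  refine Finset.prod_congr rfl fun T _ => ?_
  congr 2
  ext j
  rcases eq_or_ne j a with rfl | hj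
  · simp
  · by_cases hjT : j ∈ T <;> simp [hj, hjT, hx j hj, hy j hj]

/-- `T` and `insert a T` select the same point and carry conjugate weights. -/
lemma prod_powerset_conj_pow_eq_one {S : Finset κ} {f : (∀ j, β j) → ℂ} (hf : ∀ x, ‖f x‖ = 1)
    {x y : ∀ j, β j} (haS : a ∈ S) (hxy : x a = y a) :
    ∏ T ∈ S.powerset, (conj ^ T.card : ℂ →+* ℂ) (f (T.piecewise y x)) = 1 := by
  rw [← Finset.insert_erase haS, prod_powerset_insert_conj_pow (Finset.notMem_erase a S)]
  have hsame : ∏ T ∈ (S.erase a).powerset,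
      (conj ^ T.card : ℂ →+* ℂ) (f ((insert a T).piecewise y x)) =
        ∏ T ∈ (S.erase a).powerset, (conj ^ T.card : ℂ →+* ℂ) (f (T.piecewise y x)) :=
    Finset.prod_congr rfl fun T hT => by
      have haT : a ∉ T := fun h => Finset.notMem_erase a S (Finset.mem_powerset.1 hT h)
      rw [Finset.piecewise_insert, ← hxy, ← Finset.piecewise_eq_of_notMem T y x haT,
        update_eq_self]
  rw [hsame, Complex.mul_conj', norm_prod]
  simp only [norm_conj_pow_apply, hf, Finset.prod_const_one, Complex.ofReal_one, one_pow]

end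

variable {κ : Type*} [Fintype κ] [DecidableEq κ] {β : κ → Type*} [∀ j, Fintype (β j)]
  {a : κ} {S : Finset κ}

lemma sum_sum_update {M : Type*} [AddCommMonoid M] (a : κ) (h : (∀ j, β j) → M) :
    ∑ x, ∑ u, h (update x a u) = Fintype.card (β a) • ∑ x, h x := by
  let e : Equiv.Perm ((∀ j, β j) × β a) :=
    Involutive.toPerm (fun p => (update p.1 a p.2, p.1 a)) fun p => by simp
  calc ∑ x, ∑ u, h (update x a u) = ∑ p : (∀ j, β j) × β a, h (e p).1 :=
        (Fintype.sum_prod_type' _).symm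
    _ = ∑ p : (∀ j, β j) × β a, h p.1 := Equiv.sum_comp e fun p => h p.1
    _ = Fintype.card (β a) • ∑ x, h x := by simp [Fintype.sum_prod_type_right]

def boxSum (S : Finset κ) (f : (∀ j, β j) → ℂ) : ℂ :=
  ∑ x, ∑ y, ∏ T ∈ S.powerset, (conj ^ T.card : ℂ →+* ℂ) (f (T.piecewise y x))

def correlation (S : Finset κ) (f : (∀ j, β j) → ℂ) (φ : κ → (∀ j, β j) → ℂ) : ℂ :=
  ∑ x, f x * ∏ j ∈ S, φ j x

lemma boxSum_empty (f : (∀ j, β j) → ℂ) :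
    boxSum ∅ f = Fintype.card (∀ j, β j) • ∑ x, f x := by
  simp [boxSum, Finset.smul_sum]

lemma boxSum_insert (ha : a ∉ S) (f : (∀ j, β j) → ℂ) :
    boxSum (insert a S) f =
      ∑ x, ∑ y, boxFiber a S f x y (x a) * conj (boxFiber a S f x y (y a)) := by
  refine Finset.sum_congr rfl fun x _ => Finset.sum_congr rfl fun y _ => ?_
  rw [prod_powerset_insert_conj_pow ha]
  congr 1
  · refine Finset.prod_congr rfl fun T hT => ?_
    have haT : a ∉ T := fun h => ha (Finset.mem_powerset.1 hT h)
    rw [← Finset.piecewise_eq_of_notMem T y x haT, update_eq_self]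
  · congr 1
    refine Finset.prod_congr rfl fun T _ => ?_
    rw [Finset.piecewise_insert]

lemma card_sq_mul_boxSum_insert (ha : a ∉ S) (f : (∀ j, β j) → ℂ) :
    (Fintype.card (β a) : ℂ) ^ 2 * boxSum (insert a S) f =
      ∑ x, ∑ y, (∑ u, boxFiber a S f x y u) * conj (∑ v, boxFiber a S f x y v) := by
  have hx : ∀ (x : ∀ j, β j) (b : β a), ∀ j ≠ a, update x a b j = x j :=
    fun x b j hj => update_of_ne hj _ _
  have resample_x : ∀ y, Fintype.card (β a) • ∑ x,
      boxFiber a S f x y (x a) * conj (boxFiber a S f x y (y a)) =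
        ∑ x, (∑ u, boxFiber a S f x y u) * conj (boxFiber a S f x y (y a)) := fun y => by
    rw [← sum_sum_update a]
    simp [boxFiber_congr f (hx _ _) (fun _ _ => rfl), Finset.sum_mul]
  have resample_y : ∀ x, Fintype.card (β a) • ∑ y,
      (∑ u, boxFiber a S f x y u) * conj (boxFiber a S f x y (y a)) =
        ∑ y, (∑ u, boxFiber a S f x y u) * conj (∑ v, boxFiber a S f x y v) := fun x => by
    rw [← sum_sum_update a]
    simp [boxFiber_congr f (fun _ _ => rfl) (hx _ _), Finset.mul_sum]
  rw [sq, mul_assoc, ← nsmul_eq_mul, ← nsmul_eq_mul, boxSum_insert ha, Finset.sum_comm,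
    Finset.smul_sum]
  simp_rw [resample_x]
  rw [Finset.sum_comm, Finset.smul_sum]
  simp_rw [resample_y]

lemma boxSum_mulDeriv (f : (∀ j, β j) → ℂ) (u v : β a) :
    boxSum S (mulDeriv a u v f) =
      ∑ x, ∑ y, boxFiber a S f x y u * conj (boxFiber a S f x y v) := by
  refine Finset.sum_congr rfl fun x _ => Finset.sum_congr rfl fun y _ => ?_
  simp only [boxFiber, mulDeriv, map_mul, conj_pow_apply_conj, map_prod, Finset.prod_mul_distrib]

lemma card_sq_mul_boxSum_insert_eq_sum (ha : a ∉ S) (f : (∀ j, β j) → ℂ) :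
    (Fintype.card (β a) : ℂ) ^ 2 * boxSum (insert a S) f =
      ∑ u, ∑ v, boxSum S (mulDeriv a u v f) := by
  simp only [card_sq_mul_boxSum_insert ha, boxSum_mulDeriv, map_sum, Finset.sum_mul_sum]
  simp_rw [Finset.sum_comm (s := (Finset.univ : Finset (∀ j, β j)))
    (t := (Finset.univ : Finset (β a)))]

lemma boxSum_nonneg (hS : S.Nonempty) (f : (∀ j, β j) → ℂ) : 0 ≤ boxSum S f := by
  obtain ⟨a, haS⟩ := hS
  rcases isEmpty_or_nonempty (β a) with hβ | hβ
  · have : IsEmpty (∀ j, β j) := ⟨fun x => hβ.elim (x a)⟩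
    simp [boxSum]
  have hcard : (Fintype.card (β a) : ℂ) ^ 2 ≠ 0 := by simp
  rw [← Finset.insert_erase haS, ← inv_mul_cancel_left₀ hcard (boxSum _ f),
    card_sq_mul_boxSum_insert (Finset.notMem_erase a S)]
  refine mul_nonneg ?_ ?_
  · rw [← Nat.cast_pow, ← Complex.ofReal_natCast, ← Complex.ofReal_inv]
    exact Complex.zero_le_real.2 (by positivity)
  · exact Finset.sum_nonneg fun x _ => Finset.sum_nonneg fun y _ => mul_star_self_nonneg _

lemma boxSum_prod_rows {ι : Type*} [Fintype ι] [DecidableEq ι] {γ : κ → Type*}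
    [∀ j, Fintype (γ j)] (S : Finset κ) (g : ι → (∀ j, γ j) → ℂ) :
    boxSum S (fun x : ∀ j, ι → γ j => ∏ i, g i (fun j => x j i)) = ∏ i, boxSum S (g i) := by
  have hrow : ∀ (T : Finset κ) (x y : ∀ j, ι → γ j) (i : ι),
      (fun j => T.piecewise y x j i) = T.piecewise (fun j => y j i) (fun j => x j i) :=
    fun T x y i => funext fun j => by by_cases hj : j ∈ T <;> simp [hj]
  let e : (∀ j, ι → γ j) × (∀ j, ι → γ j) ≃ (ι → (∀ j, γ j) × (∀ j, γ j)) :=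
    ((Equiv.piComm _).prodCongr (Equiv.piComm _)).trans
      (Equiv.arrowProdEquivProdArrow _ _ _).symm
  let H : ι → (∀ j, γ j) × (∀ j, γ j) → ℂ := fun i p =>
    ∏ T ∈ S.powerset, (conj ^ T.card : ℂ →+* ℂ) (g i (T.piecewise p.2 p.1))
  symm
  calc ∏ i, boxSum S (g i) = ∏ i, ∑ p, H i p := by simp only [boxSum, ← Fintype.sum_prod_type', H]
    _ = ∑ P : ι → (∀ j, γ j) × (∀ j, γ j), ∏ i, H i (P i) := Fintype.prod_sum H
    _ = ∑ q, ∏ i, H i (e q i) :=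
        (Fintype.sum_equiv e _ (fun P => ∏ i, H i (P i)) fun _ => rfl).symm
    _ = _ := by
      rw [boxSum, ← Fintype.sum_prod_type']
      refine Finset.sum_congr rfl fun q _ => ?_
      simp only [H, map_prod, hrow]
      exact Finset.prod_comm

lemma sq_card_mul_norm_correlation_insert_le (ha : a ∉ S) (f : (∀ j, β j) → ℂ)
    (φ : κ → (∀ j, β j) → ℂ) (hφa : ∀ x, ‖φ a x‖ ≤ 1) (hdep : DependsOn (φ a) {a}ᶜ) :
    (Fintype.card (β a) * ‖correlation (insert a S) f φ‖) ^ 2 ≤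
      Fintype.card (∀ j, β j) *
        ‖∑ u, ∑ v, correlation S (mulDeriv a u v f) (fun j => mulDeriv a u v (φ j))‖ := by
  set G : (∀ j, β j) → ℂ := fun x => f x * ∏ j ∈ S, φ j x
  set I : (∀ j, β j) → ℂ := fun x => ∑ u, G (update x a u)
  have resample : Fintype.card (β a) • correlation (insert a S) f φ = ∑ x, φ a x * I x := by
    rw [correlation, ← sum_sum_update a]
    refine Finset.sum_congr rfl fun x _ => ?_
    rw [Finset.mul_sum]
    refine Finset.sum_congr rfl fun u _ => ?_
    have : φ a (update x a u) = φ a x := hdep fun j hj => update_of_ne hj _ _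
    rw [Finset.prod_insert ha, this]
    ring
  have expand : ∑ u, ∑ v, correlation S (mulDeriv a u v f) (fun j => mulDeriv a u v (φ j)) =
      ((∑ x, ‖I x‖ ^ 2 : ℝ) : ℂ) := by
    simp only [Complex.ofReal_sum, Complex.ofReal_pow, ← Complex.mul_conj']
    simp only [I, map_sum, Finset.sum_mul_sum, correlation]
    simp_rw [Finset.sum_comm (s := (Finset.univ : Finset (∀ j, β j)))
      (t := (Finset.univ : Finset (β a)))]
    simp only [G, mulDeriv, map_mul, map_prod, Finset.prod_mul_distrib]
    exact Finset.sum_congr rfl fun u _ => Finset.sum_congr rfl fun v _ =>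
      Finset.sum_congr rfl fun x _ => by ring
  calc (Fintype.card (β a) * ‖correlation (insert a S) f φ‖) ^ 2
      = ‖∑ x, φ a x * I x‖ ^ 2 := by
        rw [← resample, nsmul_eq_mul, norm_mul, Complex.norm_natCast]
    _ ≤ (∑ x, ‖I x‖) ^ 2 := by
        gcongr
        refine (norm_sum_le _ _).trans (Finset.sum_le_sum fun x _ => ?_)
        rw [norm_mul]
        exact mul_le_of_le_one_left (norm_nonneg _) (hφa x)
    _ ≤ Fintype.card (∀ j, β j) * ∑ x, ‖I x‖ ^ 2 := sq_sum_le_card_mul_sum_sq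
    _ = _ := by
        rw [expand, Complex.norm_real, Real.norm_of_nonneg (by positivity)]

lemma sq_norm_correlation_singleton_le [Nonempty (β a)] (f : (∀ j, β j) → ℂ)
    (φ : κ → (∀ j, β j) → ℂ) (hφa : ∀ x, ‖φ a x‖ ≤ 1) (hdep : DependsOn (φ a) {a}ᶜ) :
    ‖correlation {a} f φ‖ ^ 2 ≤ ‖boxSum {a} f‖ := by
  have ha := Finset.notMem_empty a
  have cs := sq_card_mul_norm_correlation_insert_le ha f φ hφa hdep
  have hrec : (Fintype.card (∀ j, β j) : ℂ) * ∑ u, ∑ v,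
      correlation ∅ (mulDeriv a u v f) (fun j => mulDeriv a u v (φ j)) =
        (Fintype.card (β a) : ℂ) ^ 2 * boxSum {a} f := by
    rw [← insert_empty_eq, card_sq_mul_boxSum_insert_eq_sum ha]
    simp [boxSum_empty, correlation, Finset.mul_sum]
  replace hrec := congrArg norm hrec
  rw [norm_mul, norm_mul, Complex.norm_natCast, norm_pow, Complex.norm_natCast] at hrec
  rw [insert_empty_eq, hrec, mul_pow] at cs
  exact le_of_mul_le_mul_left cs (by positivity)

lemma sum_norm_boxSum_mulDeriv (ha : a ∉ S) (hS : S.Nonempty) (f : (∀ j, β j) → ℂ) :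
    ∑ p : β a × β a, ‖boxSum S (mulDeriv a p.1 p.2 f)‖ =
      (Fintype.card (β a) : ℝ) ^ 2 * ‖boxSum (insert a S) f‖ := by
  apply Complex.ofReal_injective
  push_cast
  rw [Complex.norm_of_nonneg' (boxSum_nonneg (Finset.insert_nonempty a S) f),
    card_sq_mul_boxSum_insert_eq_sum ha, ← Fintype.sum_prod_type']
  exact Finset.sum_congr rfl fun p _ => Complex.norm_of_nonneg' (boxSum_nonneg hS _)

lemma norm_correlation_insert_div_pow_le [∀ j, Nonempty (β j)] (ha : a ∉ S) (hS : S.Nonempty)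
    (f : (∀ j, β j) → ℂ) (φ : κ → (∀ j, β j) → ℂ) (hφa : ∀ x, ‖φ a x‖ ≤ 1)
    (hdep : DependsOn (φ a) {a}ᶜ)
    (ih : ∀ u v : β a, (‖correlation S (mulDeriv a u v f) (fun j => mulDeriv a u v (φ j))‖ /
      Fintype.card (∀ j, β j)) ^ 2 ^ S.card ≤
        ‖boxSum S (mulDeriv a u v f)‖ / (Fintype.card (∀ j, β j) : ℝ) ^ 2) :
    (‖correlation (insert a S) f φ‖ / Fintype.card (∀ j, β j)) ^ 2 ^ (insert a S).card ≤
      ‖boxSum (insert a S) f‖ / (Fintype.card (∀ j, β j) : ℝ) ^ 2 := by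
  set N : ℝ := (Fintype.card (∀ j, β j) : ℝ)
  have hN : 0 < N := by positivity
  set Γ : β a × β a → ℂ := fun p =>
    correlation S (mulDeriv a p.1 p.2 f) (fun j => mulDeriv a p.1 p.2 (φ j))
  have hP : (Fintype.card (β a × β a) : ℝ) = (Fintype.card (β a) : ℝ) ^ 2 := by
    simp [Fintype.card_prod, sq]
  have square : (‖correlation (insert a S) f φ‖ / N) ^ 2 ≤
      (∑ p, ‖Γ p‖ / N) / Fintype.card (β a × β a) := by
    have cs := sq_card_mul_norm_correlation_insert_le ha f φ hφa hdep
    rw [← Fintype.sum_prod_type'] at cs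
    have := cs.trans (mul_le_mul_of_nonneg_left (norm_sum_le _ _) hN.le)
    rw [div_pow, hP, ← Finset.sum_div, div_div, div_le_div_iff₀ (by positivity) (by positivity)]
    nlinarith
  calc (‖correlation (insert a S) f φ‖ / N) ^ 2 ^ (insert a S).card
      = ((‖correlation (insert a S) f φ‖ / N) ^ 2) ^ 2 ^ S.card := by
        rw [Finset.card_insert_of_notMem ha, pow_succ', pow_mul]
    _ ≤ ((∑ p, ‖Γ p‖ / N) / Fintype.card (β a × β a)) ^ 2 ^ S.card := by gcongr
    _ ≤ (∑ p, (‖Γ p‖ / N) ^ 2 ^ S.card) / Fintype.card (β a × β a) :=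
        pow_sum_div_card_le_sum_pow_div_card (fun p => by positivity) _
    _ ≤ (∑ p : β a × β a, ‖boxSum S (mulDeriv a p.1 p.2 f)‖ / N ^ 2) /
          Fintype.card (β a × β a) := by
        gcongr with p
        exact ih p.1 p.2
    _ = ‖boxSum (insert a S) f‖ / N ^ 2 := by
        rw [← Finset.sum_div, sum_norm_boxSum_mulDeriv ha hS, hP]
        field_simp

theorem norm_correlation_div_pow_le (hS : S.Nonempty) (f : (∀ j, β j) → ℂ)
    (φ : κ → (∀ j, β j) → ℂ) (hφ : ∀ j ∈ S, ∀ x, ‖φ j x‖ ≤ 1)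
    (hdep : ∀ j ∈ S, DependsOn (φ j) {j}ᶜ) :
    (‖correlation S f φ‖ / Fintype.card (∀ j, β j)) ^ 2 ^ S.card ≤
      ‖boxSum S f‖ / (Fintype.card (∀ j, β j) : ℝ) ^ 2 := by
  rcases isEmpty_or_nonempty (∀ j, β j) with hβ | hβ
  · simp
  have : ∀ j, Nonempty (β j) := fun j => ⟨hβ.some j⟩
  induction hS using Finset.Nonempty.cons_induction generalizing f φ with
  | singleton a =>
    rw [Finset.card_singleton, pow_one, div_pow]
    gcongr
    exact sq_norm_correlation_singleton_le f φ (hφ a (Finset.mem_singleton_self a))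
      (hdep a (Finset.mem_singleton_self a))
  | cons a S ha hS ih =>
    rw [Finset.cons_eq_insert] at hφ hdep ⊢
    refine norm_correlation_insert_div_pow_le ha hS f φ (hφ a (Finset.mem_insert_self a S))
      (hdep a (Finset.mem_insert_self a S)) fun u v => ih _ _ (fun j hj => ?_) (fun j hj => ?_)
    · exact norm_mulDeriv_le_one (hφ j (Finset.mem_insert_of_mem hj)) _ _
    · exact dependsOn_mulDeriv (hdep j (Finset.mem_insert_of_mem hj)) _ _

end BoxNorm

lemma eFn_natCast_mul (m : ℕ) (t : ℂ) : eFn (m * t) = eFn t ^ m := by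
  rw [eFn, eFn, ← Complex.exp_nat_mul]
  ring_nf

lemma eFn_natCast_div_three (m : ℕ) : eFn ((m : ℂ) / 3) = eFn (1 / 3) ^ m := by
  rw [← eFn_natCast_mul, mul_one_div]

lemma isPrimitiveRoot_eFn_one_div {m : ℕ} (hm : m ≠ 0) : IsPrimitiveRoot (eFn (1 / m)) m := by
  rw [eFn, mul_one_div]
  exact Complex.isPrimitiveRoot_exp m hm

lemma IsPrimitiveRoot.add_conj_eq_neg_one {ζ : ℂ} (hζ : IsPrimitiveRoot ζ 3) :
    ζ + conj ζ = -1 := by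
  have hconj : conj ζ = ζ ^ 2 := by
    refine mul_left_cancel₀ (hζ.ne_zero (by norm_num)) ?_
    rw [Complex.mul_conj', hζ.norm'_eq_one (by norm_num), ← pow_succ', hζ.pow_eq_one]
    simp
  have hsum := hζ.geom_sum_eq_zero (by norm_num)
  simp only [Finset.sum_range_succ, Finset.sum_range_zero] at hsum
  rw [hconj]
  linear_combination hsum

lemma Finset.prod_powerset_card_mod_two {ι M : Type*} [DecidableEq ι] [CommMonoid M]
    {s : Finset ι} (hs : s.Nonempty) (F : ℕ → M) :
    ∏ T ∈ s.powerset, F (T.card % 2) = (F 0 * F 1) ^ 2 ^ (s.card - 1) := by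
  obtain ⟨a, ha⟩ := hs
  have ha' := Finset.notMem_erase a s
  rw [← Finset.insert_erase ha, Finset.prod_powerset_insert ha', ← Finset.prod_mul_distrib,
    Finset.card_insert_of_notMem ha', Nat.add_sub_cancel, ← Finset.card_powerset,
    ← Finset.prod_const]
  refine Finset.prod_congr rfl fun T hT => ?_
  rw [Finset.card_insert_of_notMem fun h => ha' (Finset.mem_powerset.1 hT h)]
  rcases Nat.mod_two_eq_zero_or_one T.card with h | h <;> simp [Nat.add_mod, h, mul_comm]

lemma rowXor_lt_two {k : ℕ} (u : Fin k → Bool) : rowXor u < 2 := Nat.mod_lt _ two_pos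

lemma rowXor_piecewise_not {k : ℕ} (x : Fin k → Bool) (T : Finset (Fin k)) :
    rowXor (T.piecewise (fun j => !x j) x) = (rowXor x + T.card) % 2 := by
  have hpt : ∀ j, (if T.piecewise (fun j => !x j) x j = true then 1 else 0) +
      2 * (if j ∈ T ∧ x j = true then 1 else 0) =
        (if x j = true then 1 else 0) + (if j ∈ T then 1 else 0) := fun j => by
    by_cases hj : j ∈ T <;> cases hx : x j <;> simp [hj, hx]
  have hsum := Finset.sum_congr (s₁ := Finset.univ) rfl fun j _ => hpt j
  simp only [Finset.sum_add_distrib, ← Finset.mul_sum, ← Finset.card_filter,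
    Finset.filter_mem_eq_inter, Finset.univ_inter] at hsum
  rw [rowXor, rowXor]
  omega

lemma sum_rowXor {k : ℕ} (hk : 0 < k) (G : ℕ → ℂ) :
    ∑ x : Fin k → Bool, G (rowXor x) = 2 ^ (k - 1) * (G 0 + G 1) := by
  let a : Fin k := ⟨0, hk⟩
  have hpair : ∀ x : Fin k → Bool, ∑ b, G (rowXor (update x a b)) = G 0 + G 1 := fun x => by
    have hflip := rowXor_piecewise_not (update x a false) {a}
    rw [Finset.piecewise_singleton, update_idem, update_self, Bool.not_false,
      Finset.card_singleton] at hflip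
    rw [Fintype.sum_bool, hflip]
    obtain h | h : rowXor (update x a false) = 0 ∨ rowXor (update x a false) = 1 := by
      have := rowXor_lt_two (update x a false)
      omega
    all_goals simp [h, add_comm]
  have hresample := BoxNorm.sum_sum_update (β := fun _ : Fin k => Bool) a fun x => G (rowXor x)
  simp only [hpair, Finset.sum_const, Finset.card_univ, Fintype.card_bool, Fintype.card_fun,
    Fintype.card_fin, nsmul_eq_mul] at hresample
  have hk' : (2 : ℂ) ^ k = 2 * 2 ^ (k - 1) := by rw [← pow_succ', Nat.sub_add_cancel hk]
  push_cast at hresample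
  rw [hk'] at hresample
  exact (mul_left_cancel₀ two_ne_zero (by linear_combination hresample)).symm

lemma prod_powerset_conj_pow_piecewise_not {k : ℕ} (hk : 0 < k) (ζ : ℂ) (x : Fin k → Bool) :
    ∏ T ∈ (Finset.univ : Finset (Fin k)).powerset,
        (conj ^ T.card : ℂ →+* ℂ) (ζ ^ rowXor (T.piecewise (fun j => !x j) x)) =
      if rowXor x = 1 then ζ ^ 2 ^ (k - 1) else conj ζ ^ 2 ^ (k - 1) := by
  set r := rowXor x
  have hterm : ∀ T : Finset (Fin k),
      (conj ^ T.card : ℂ →+* ℂ) (ζ ^ rowXor (T.piecewise (fun j => !x j) x)) =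
        (conj ^ (T.card % 2) : ℂ →+* ℂ) (ζ ^ ((r + T.card % 2) % 2)) := fun T => by
    rw [rowXor_piecewise_not, BoxNorm.conj_pow_apply_eq_mod_two, Nat.add_mod_mod]
  simp only [hterm]
  rw [Finset.prod_powerset_card_mod_two (F := fun e => (conj ^ e : ℂ →+* ℂ) (ζ ^ ((r + e) % 2)))
    ⟨⟨0, hk⟩, Finset.mem_univ _⟩, Finset.card_univ, Fintype.card_fin]
  obtain h | h : r = 0 ∨ r = 1 := by
    have := rowXor_lt_two x
    omega
  all_goals simp [h]

theorem boxSum_univ_pow_rowXor {k : ℕ} (hk : 0 < k) {ζ : ℂ} (hζ : IsPrimitiveRoot ζ 3) :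
    BoxNorm.boxSum (Finset.univ : Finset (Fin k)) (fun x : Fin k → Bool => ζ ^ rowXor x) =
      4 ^ k - 2 ^ k - 2 ^ (k - 1) := by
  set P : (Fin k → Bool) → (Fin k → Bool) → ℂ := fun x y =>
    ∏ T ∈ (Finset.univ : Finset (Fin k)).powerset,
      (conj ^ T.card : ℂ →+* ℂ) (ζ ^ rowXor (T.piecewise y x))
  have hunit : ∀ x : Fin k → Bool, ‖ζ ^ rowXor x‖ = 1 := fun x => by
    rw [norm_pow, hζ.norm'_eq_one (by norm_num), one_pow]
  have hsum_y : ∀ x, ∑ y, P x y = 2 ^ k - 1 + P x (fun j => !x j) := fun x => by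
    have hsingle : ∑ y, (P x y - 1) = P x (fun j => !x j) - 1 :=
      Fintype.sum_eq_single _ fun y hy => by
        obtain ⟨j, hj⟩ : ∃ j, x j = y j := by
          by_contra! h
          exact hy (funext fun j => Bool.eq_not_iff.2 (h j).symm)
        rw [sub_eq_zero]
        exact BoxNorm.prod_powerset_conj_pow_eq_one hunit (Finset.mem_univ j) hj
    simp only [Finset.sum_sub_distrib, Finset.sum_const, Finset.card_univ, Fintype.card_fun,
      Fintype.card_bool, Fintype.card_fin, nsmul_eq_mul, mul_one] at hsingle
    push_cast at hsingle
    linear_combination hsingle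
  have hM := (hζ.pow_of_coprime (2 ^ (k - 1))
    (Nat.Coprime.pow_left _ (by norm_num))).add_conj_eq_neg_one
  calc BoxNorm.boxSum Finset.univ (fun x : Fin k → Bool => ζ ^ rowXor x) = ∑ x, ∑ y, P x y := rfl
    _ = ∑ x, (2 ^ k - 1 + if rowXor x = 1 then ζ ^ 2 ^ (k - 1) else conj ζ ^ 2 ^ (k - 1)) := by
      simp only [hsum_y, P, prod_powerset_conj_pow_piecewise_not hk]
      rfl
    _ = 4 ^ k - 2 ^ k - 2 ^ (k - 1) := by
      rw [Finset.sum_add_distrib, sum_rowXor hk (fun r => if r = 1 then _ else _)]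
      have h4 : (2 : ℂ) ^ k * 2 ^ k = 4 ^ k := by rw [← mul_pow]; norm_num
      rw [map_pow] at hM
      simp only [Finset.sum_const, Finset.card_univ, Fintype.card_fun, Fintype.card_bool,
        Fintype.card_fin, nsmul_eq_mul, zero_ne_one, if_false, if_true]
      push_cast
      linear_combination (2 : ℂ) ^ (k - 1) * hM + h4

/-- The phase `e((1/3) ∑_i rowXor(X_i))`, read off the columns `x j = X_{·,j}` of `X`. -/
noncomputable def innerSumPhase (n k : ℕ) : (Fin k → Fin n → Bool) → ℂ :=
  fun x => ∏ i, eFn (1 / 3) ^ rowXor fun j => x j i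

lemma norm_boxSum_innerSumPhase {n k : ℕ} (hk : 0 < k) :
    ‖BoxNorm.boxSum Finset.univ (innerSumPhase n k)‖ =
      ((4 : ℝ) ^ k - 2 ^ k - 2 ^ (k - 1)) ^ n := by
  have hζ : IsPrimitiveRoot (eFn (1 / 3)) 3 := by
    simpa using isPrimitiveRoot_eFn_one_div (m := 3) (by norm_num)
  have hc : 0 ≤ (4 : ℝ) ^ k - 2 ^ k - 2 ^ (k - 1) := by
    have h1 : (2 : ℝ) ^ (k - 1) ≤ 2 ^ k := pow_le_pow_right₀ one_le_two (Nat.sub_le k 1)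
    have h2 : (2 : ℝ) ^ k * 2 ≤ 4 ^ k := by
      rw [show (4 : ℝ) = 2 * 2 by norm_num, mul_pow]
      gcongr
      exact le_self_pow₀ one_le_two hk.ne'
    linarith
  unfold innerSumPhase
  rw [BoxNorm.boxSum_prod_rows (γ := fun _ => Bool) _
      fun _ x => eFn (1 / 3) ^ rowXor x, Finset.prod_const, boxSum_univ_pow_rowXor hk hζ,
    Finset.card_univ, Fintype.card_fin, norm_pow]
  congr 1
  rw [← Real.norm_of_nonneg hc, ← Complex.norm_real]
  push_cast
  rfl

lemma IsCylinderOn.exists_correlation_eq {n k : ℕ} {χ : (Fin n → Fin k → Bool) → ℝ}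
    (hχ : IsCylinderOn n k Finset.univ χ) :
    ∃ ψ : Fin k → (Fin k → Fin n → Bool) → ℂ, (∀ j x, ‖ψ j x‖ ≤ 1) ∧
      (∀ j, DependsOn (ψ j) {j}ᶜ) ∧
      ∑ X : Fin n → Fin k → Bool, eFn (((∑ i, rowXor (X i) : ℕ) : ℂ) / 3) * (χ X : ℂ) =
        BoxNorm.correlation Finset.univ (innerSumPhase n k) ψ := by
  obtain ⟨φ, hφ01, hφdep, hχφ⟩ := hχ
  refine ⟨fun j x => φ j fun i j' => x j' i, fun j x => ?_, fun j x y hxy => ?_, ?_⟩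
  · rcases hφ01 j (Finset.mem_univ j) (fun i j' => x j' i) with h | h <;> simp [h]
  · simp only
    rw [hφdep j (Finset.mem_univ j) _ _ fun i j' hj' => congrFun (hxy j' hj') i]
  · rw [BoxNorm.correlation, ← (Equiv.piComm fun (_ : Fin n) (_ : Fin k) => Bool).sum_comp]
    refine Finset.sum_congr rfl fun X _ => ?_
    rw [eFn_natCast_div_three, ← Finset.prod_pow_eq_pow_sum, hχφ, Complex.ofReal_prod]
    rfl

lemma four_pow_sub_pow_div_lt_exp_pow {n k : ℕ} (hn : 0 < n) (hk : 0 < k) :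
    ((4 : ℝ) ^ k - 2 ^ k - 2 ^ (k - 1)) ^ n / ((2 : ℝ) ^ (n * k)) ^ 2 <
      Real.exp (-(n : ℝ) / 4 ^ k) ^ 2 ^ k := by
  set t : ℝ := 2 ^ (k - 1)
  have ht : 1 ≤ t := one_le_pow₀ one_le_two
  have h2k : (2 : ℝ) ^ k = 2 * t := by rw [← pow_succ', Nat.sub_add_cancel hk]
  have h4k : (4 : ℝ) ^ k = 4 * t ^ 2 := by
    rw [show (4 : ℝ) = 2 ^ 2 by norm_num, ← pow_mul, mul_comm, pow_mul, h2k]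
    ring
  have hbase : ((4 : ℝ) ^ k - 2 ^ k - 2 ^ (k - 1)) ^ n / ((2 : ℝ) ^ (n * k)) ^ 2 =
      (1 - 3 / (4 * t)) ^ n := by
    have hN : ((2 : ℝ) ^ (n * k)) ^ 2 = (4 ^ k) ^ n := by
      rw [← pow_mul, ← pow_mul, show (4 : ℝ) = 2 ^ 2 by norm_num, ← pow_mul]
      ring_nf
    rw [hN, ← div_pow, h4k, h2k]
    congr 1
    field_simp
    ring
  have hexp : Real.exp (-(n : ℝ) / 4 ^ k) ^ 2 ^ k = Real.exp (-1 / (2 * t)) ^ n := by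
    rw [← Real.exp_nat_mul, ← Real.exp_nat_mul]
    congr 1
    push_cast
    rw [h4k, h2k]
    field_simp
    norm_num
  rw [hbase, hexp]
  refine pow_lt_pow_left₀ ?_ ?_ hn.ne'
  · calc 1 - 3 / (4 * t) ≤ Real.exp (-(3 / (4 * t))) := by
          linarith [Real.add_one_le_exp (-(3 / (4 * t)))]
      _ < Real.exp (-1 / (2 * t)) := by
          rw [Real.exp_lt_exp, neg_div, neg_lt_neg_iff, div_lt_div_iff₀ (by positivity)
            (by positivity)]
          nlinarith
  · rw [sub_nonneg, div_le_one (by positivity)]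
    linarith

/-- correlation bound for full cylinder intersections. -/
theorem stmt_13 (n k : ℕ) (hn : 0 < n) (hk : 0 < k)
    (χ : (Fin n → Fin k → Bool) → ℝ)
    (hχ : IsCylinderOn n k Finset.univ χ) :
    ‖(∑ X : Fin n → Fin k → Bool,
            eFn (((∑ i, rowXor (X i) : ℕ) : ℂ) / 3) * (χ X : ℂ)) /
          2 ^ (n * k)‖ <
      Real.exp (-(n : ℝ) / 4 ^ k) := by
  obtain ⟨ψ, hψ, hdep, hcorr⟩ := hχ.exists_correlation_eq
  have hmain := BoxNorm.norm_correlation_div_pow_le ⟨⟨0, hk⟩, Finset.mem_univ _⟩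
    (innerSumPhase n k) ψ (fun j _ => hψ j) (fun j _ => hdep j)
  have hN : (Fintype.card (Fin k → Fin n → Bool) : ℝ) = 2 ^ (n * k) := by simp [← pow_mul]
  rw [norm_boxSum_innerSumPhase hk, hN, Finset.card_univ, Fintype.card_fin] at hmain
  rw [hcorr, norm_div, norm_pow, Complex.norm_ofNat]
  exact lt_of_pow_lt_pow_left₀ (2 ^ k) (Real.exp_nonneg _)
    (hmain.trans_lt (four_pow_sub_pow_div_lt_exp_pow hn hk))
end

section
/- For every integer k ≥ 1 and every u ∈ {0,1}^k, there exists a polynomial p ∈ 𝔽₃[x₁,…,x_k] of total degree at most k−1 such that for every x ∈ {0,1}^k with x ≠ u, p(x₁,…,x_k) equals the parity x₁ ⊕ x₂ ⊕ ⋯ ⊕ x_k (viewed as the element 0 or 1 of 𝔽₃). In fact, one may take p(x₁,…,x_k) = ∏_{i=1}^k (x_i + 1) − ∏_{i=1}^k (x_i + u_i − 1) − 1, where the bits of x and u are interpreted as elements of 𝔽₃. -/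
/-!
Both products have leading part `∏ xᵢ`, so their difference has degree below `k`. At a Boolean
point, `xᵢ + 1` is `-1` or `1` in `𝔽₃`, so the first product is `(-1)^|x|` and subtracting `1`
gives the parity; the second product vanishes as soon as `xⱼ ≠ uⱼ`, since then `xⱼ + uⱼ = 1`.
-/

open Finset

def bval3 (b : Bool) : ZMod 3 := if b then 1 else 0

namespace MvPolynomial

variable {R σ : Type*} [DecidableEq σ]

theorem prod_X_add_C_eq_sum_powerset [CommSemiring R] (s : Finset σ) (a : σ → R) :
    ∏ i ∈ s, (X i + C (a i)) = ∑ t ∈ s.powerset, (∏ i ∈ t, X i) * C (∏ i ∈ s \ t, a i) := by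
  rw [Finset.prod_add]
  simp only [map_prod]

theorem totalDegree_prod_X_add_C_sub_prod_X_add_C_le [CommRing R] (s : Finset σ) (a b : σ → R) :
    (∏ i ∈ s, (X i + C (a i)) - ∏ i ∈ s, (X i + C (b i))).totalDegree ≤ s.card - 1 := by
  rw [prod_X_add_C_eq_sum_powerset, prod_X_add_C_eq_sum_powerset, ← sum_sub_distrib]
  refine totalDegree_finsetSum_le fun t ht => ?_
  rw [← mul_sub, ← map_sub]
  obtain rfl | hts := eq_or_ne t s
  · simp
  have hcard : t.card < s.card := card_lt_card ((mem_powerset.mp ht).lt_of_ne hts)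
  calc ((∏ i ∈ t, X i) * C (∏ i ∈ s \ t, a i - ∏ i ∈ s \ t, b i)).totalDegree
      ≤ (∏ i ∈ t, (X i : MvPolynomial σ R)).totalDegree := by
        refine (totalDegree_mul _ _).trans ?_
        rw [totalDegree_C, add_zero]
    _ ≤ ∑ i ∈ t, (X i : MvPolynomial σ R).totalDegree := totalDegree_finsetProd _ _
    _ ≤ ∑ _i ∈ t, 1 := sum_le_sum fun i _ => (totalDegree_monomial_le _ _).trans (by simp)
    _ ≤ t.card := by rw [card_eq_sum_ones]
    _ ≤ s.card - 1 := by omega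

end MvPolynomial

theorem bval3_add_bval3_sub_one_of_ne {a b : Bool} (h : a ≠ b) : bval3 a + bval3 b - 1 = 0 := by
  cases a <;> cases b <;> first | exact absurd rfl h | decide

theorem prod_bval3_add_one {ι : Type*} [Fintype ι] (x : ι → Bool) :
    ∏ i, (bval3 (x i) + 1) = (-1) ^ (univ.filter fun i => x i = true).card := by
  have h : ∀ i, bval3 (x i) + 1 = if x i = true then -1 else 1 := fun i => by
    cases x i <;> decide
  simp only [h, prod_ite, prod_const, one_pow, mul_one]

theorem neg_one_pow_sub_one_zmod_three (n : ℕ) :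
    (-1 : ZMod 3) ^ n - 1 = if n % 2 = 1 then 1 else 0 := by
  rcases Nat.even_or_odd n with hn | hn
  · rw [hn.neg_one_pow, if_neg (by rw [Nat.even_iff.mp hn]; decide), sub_self]
  · rw [hn.neg_one_pow, if_pos (Nat.odd_iff.mp hn)]
    decide

open MvPolynomial in
theorem stmt_17_general (k : ℕ) (u : Fin k → Bool) :
    ∃ p : MvPolynomial (Fin k) (ZMod 3),
      p = (∏ i, (MvPolynomial.X i + 1)) -
          (∏ i, (MvPolynomial.X i + MvPolynomial.C (bval3 (u i)) - 1)) - 1 ∧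
      p.totalDegree ≤ k - 1 ∧
      ∀ x : Fin k → Bool, x ≠ u →
        MvPolynomial.eval (fun i => bval3 (x i)) p =
          (if (Finset.univ.filter (fun i => x i = true)).card % 2 = 1 then 1 else 0) := by
  refine ⟨_, rfl, ?_, fun x hx => ?_⟩
  · have hprod : ∏ i, (X i + C (bval3 (u i)) - 1 : MvPolynomial (Fin k) (ZMod 3)) =
        ∏ i, (X i + C (bval3 (u i) - 1)) := by
      simp only [map_sub, map_one, add_sub_assoc]
    rw [sub_eq_add_neg, hprod, ← map_one C, ← map_neg C]
    refine (totalDegree_add _ _).trans (max_le ?_ (by rw [totalDegree_C]; exact Nat.zero_le _))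
    simpa using totalDegree_prod_X_add_C_sub_prod_X_add_C_le univ (fun _ => 1)
      (fun i => bval3 (u i) - 1)
  · obtain ⟨j, hj⟩ := Function.ne_iff.mp hx
    have hvanish : ∏ i, (bval3 (x i) + bval3 (u i) - 1) = 0 :=
      prod_eq_zero (mem_univ j) (bval3_add_bval3_sub_one_of_ne hj)
    simp only [map_sub, map_one, map_prod, eval_add, eval_X, eval_C]
    rw [hvanish, sub_zero, prod_bval3_add_one, neg_one_pow_sub_one_zmod_three]

/-- For every `k ≥ 1` and `u ∈ {0,1}^k` there is a polynomial
`p ∈ 𝔽₃[x₁,…,x_k]` of total degree at most `k−1` that agrees with the parity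
`x₁ ⊕ ⋯ ⊕ x_k` on every Boolean point `x ≠ u`; one may take
`p = ∏ᵢ(xᵢ+1) − ∏ᵢ(xᵢ+uᵢ−1) − 1`. -/
theorem stmt_17 (k : ℕ) (hk : 1 ≤ k) (u : Fin k → Bool) :
    ∃ p : MvPolynomial (Fin k) (ZMod 3),
      p = (∏ i, (MvPolynomial.X i + 1)) -
          (∏ i, (MvPolynomial.X i + MvPolynomial.C (bval3 (u i)) - 1)) - 1 ∧
      p.totalDegree ≤ k - 1 ∧
      ∀ x : Fin k → Bool, x ≠ u →
        MvPolynomial.eval (fun i => bval3 (x i)) p =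
          (if (Finset.univ.filter (fun i => x i = true)).card % 2 = 1 then 1 else 0) :=
  stmt_17_general k u
end
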